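/- arXiv:2308.16365 — 6 statements merged into one kernel-verified Lean document; each statement's English description precedes it below -/
import Mathlib

section
/- Let n ≥ 5 and let c be a (5,8)-coloring of K_n. Then every connected component of every color class of c that contains at least one edge has at most 3 edges, and is therefore isomorphic to one of K_2 (a single edge), P_3 (a path with 2 edges), P_4 (a path with 3 edges), K_{1,3} (a star with 3 edges), or K_3 (a triangle). -/
open SimpleGraph

/-- The color class of color `i` in the edge-coloring `c` of the complete graph on `Fin n`:
the spanning subgraph consisting of the edges of color `i`. -/
def colorClass {n : ℕ} {α : Type*} (c : Sym2 (Fin n) → α) (i : α) :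
    SimpleGraph (Fin n) where
  Adj x y := x ≠ y ∧ c s(x, y) = i
  symm := by
    constructor
    rintro x y ⟨hxy, hc⟩
    refine ⟨hxy.symm, ?_⟩
    rwa [Sym2.eq_swap]
  loopless := by
    constructor
    rintro x ⟨hxx, -⟩
    exact hxx rfl

/-- `c` is a `(p,q)`-coloring of the complete graph on `Fin n`: every set of `p` vertices
spans edges receiving at least `q` distinct colors. -/
def IsPQColoring {n : ℕ} {α : Type*} (p q : ℕ) (c : Sym2 (Fin n) → α) : Prop :=
  ∀ S : Finset (Fin n), S.card = p →
    q ≤ {j : α | ∃ x ∈ S, ∃ y ∈ S, x ≠ y ∧ c s(x, y) = j}.ncard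

/-- `f(n,p,q)`: the minimum number of colors in a `(p,q)`-coloring of `K_n`. -/
noncomputable def fpq (n p q : ℕ) : ℕ :=
  sInf {m : ℕ | ∃ c : Sym2 (Fin n) → Fin m, IsPQColoring p q c}

/-- The coloring `c` has a monochromatic triangle. -/
def HasMonoTriangle {n : ℕ} {α : Type*} (c : Sym2 (Fin n) → α) : Prop :=
  ∃ x y z : Fin n, x ≠ y ∧ y ≠ z ∧ x ≠ z ∧
    c s(x, y) = c s(y, z) ∧ c s(y, z) = c s(x, z)

/-- The connected component `K` of `G` (as an induced subgraph) is isomorphic to `H`. -/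
def ComponentIso {V : Type*} (G : SimpleGraph V) (K : G.ConnectedComponent)
    {W : Type*} (H : SimpleGraph W) : Prop :=
  Nonempty (G.induce K.supp ≃g H)

/-- The connected component `K` of `G` contains at least one edge. -/
def CompHasEdge {V : Type*} (G : SimpleGraph V) (K : G.ConnectedComponent) : Prop :=
  ∃ u v : V, u ∈ K.supp ∧ G.Adj u v

/-- The set of monochromatic components (pairs of a color and a connected component of its
color class) isomorphic to `H`. -/
def compsIso {n : ℕ} {α : Type*} (c : Sym2 (Fin n) → α) {W : Type*} (H : SimpleGraph W) :
    Set (Σ i : α, (colorClass c i).ConnectedComponent) :=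
  {X | ComponentIso (colorClass c X.1) X.2 H}

/-- The star `K_{1,3}`. -/
def starK13 : SimpleGraph (Fin 1 ⊕ Fin 3) := completeBipartiteGraph (Fin 1) (Fin 3)

/-- `A`: maximal monochromatic components isomorphic to `K_2`. -/
def setA {n : ℕ} {α : Type*} (c : Sym2 (Fin n) → α) :
    Set (Σ i : α, (colorClass c i).ConnectedComponent) := compsIso c (pathGraph 2)

/-- `B`: maximal monochromatic components isomorphic to `P_3` (path with 2 edges). -/
def setB {n : ℕ} {α : Type*} (c : Sym2 (Fin n) → α) :
    Set (Σ i : α, (colorClass c i).ConnectedComponent) := compsIso c (pathGraph 3)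

/-- `C`: maximal monochromatic components isomorphic to `P_4` (path with 3 edges). -/
def setC {n : ℕ} {α : Type*} (c : Sym2 (Fin n) → α) :
    Set (Σ i : α, (colorClass c i).ConnectedComponent) := compsIso c (pathGraph 4)

/-- `D`: maximal monochromatic components isomorphic to `K_{1,3}`. -/
def setD {n : ℕ} {α : Type*} (c : Sym2 (Fin n) → α) :
    Set (Σ i : α, (colorClass c i).ConnectedComponent) := compsIso c starK13

/-- `B_1`: components in `B` sharing at most one vertex with every other component of `B`. -/
def setB1 {n : ℕ} {α : Type*} (c : Sym2 (Fin n) → α) :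
    Set (Σ i : α, (colorClass c i).ConnectedComponent) :=
  {X ∈ setB c | ∀ Y ∈ setB c, Y ≠ X → (X.2.supp ∩ Y.2.supp).ncard ≤ 1}

/-- `B_2 = B \ B_1`. -/
def setB2 {n : ℕ} {α : Type*} (c : Sym2 (Fin n) → α) :
    Set (Σ i : α, (colorClass c i).ConnectedComponent) := setB c \ setB1 c

/-- A monochromatic 2-edge path (for a total coloring). -/
def MonoPath2 {n : ℕ} {α : Type*} (c : Sym2 (Fin n) → α) (x y z : Fin n) : Prop :=
  x ≠ y ∧ y ≠ z ∧ x ≠ z ∧ c s(x, y) = c s(y, z)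

/-- The three values `a`, `b`, `c` take exactly two distinct values. -/
def ExactlyTwo {α : Type*} (a b c : α) : Prop :=
  (a = b ∧ a ≠ c) ∨ (b = c ∧ a ≠ b) ∨ (a = c ∧ a ≠ b)

/-- A 2-edge path `x-y-z` with both edges of color `i`, with respect to the
edge-color relation `col`. -/
def PathCol {n : ℕ} {α : Type*} (col : Sym2 (Fin n) → α → Prop) (i : α)
    (x y z : Fin n) : Prop :=
  x ≠ y ∧ y ≠ z ∧ x ≠ z ∧ col s(x, y) i ∧ col s(y, z) i

/-- A 2-edge matching `{xy, uv}` with both edges of color `i`, with respect to the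
edge-color relation `col`. -/
def MatchCol {n : ℕ} {α : Type*} (col : Sym2 (Fin n) → α → Prop) (i : α)
    (x y u v : Fin n) : Prop :=
  x ≠ y ∧ u ≠ v ∧ x ≠ u ∧ x ≠ v ∧ y ≠ u ∧ y ≠ v ∧ col s(x, y) i ∧ col s(u, v) i

/-- The colored edge set `E` contains a triangle whose three edges receive exactly
two distinct colors. -/
def TwoColTriIn {n : ℕ} {α : Type*} (E : Set (Sym2 (Fin n) × α)) : Prop :=
  ∃ (x y z : Fin n) (c₁ c₂ c₃ : α), x ≠ y ∧ y ≠ z ∧ x ≠ z ∧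
    (s(x, y), c₁) ∈ E ∧ (s(y, z), c₂) ∈ E ∧ (s(x, z), c₃) ∈ E ∧
    ExactlyTwo c₁ c₂ c₃

/-- Bad subgraph of type (a): an alternating 4-cycle formed by two monochromatic
2-edge matchings of distinct colors, with all vertices in `S`. -/
def TypeA {n : ℕ} {α : Type*} (col : Sym2 (Fin n) → α → Prop) (S : Finset (Fin n)) : Prop :=
  ∃ (w x y z : Fin n) (i ℓ : α), w ∈ S ∧ x ∈ S ∧ y ∈ S ∧ z ∈ S ∧ i ≠ ℓ ∧
    MatchCol col i w x y z ∧ MatchCol col ℓ x y z w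

/-- Bad subgraph of type (b): an alternating 5-cycle colored with two colors `i ≠ ℓ`,
where `i` appears on a 2-edge path plus a vertex-disjoint edge and `ℓ` on the remaining
two nonadjacent edges, with all vertices in `S`. -/
def TypeB {n : ℕ} {α : Type*} (col : Sym2 (Fin n) → α → Prop) (S : Finset (Fin n)) : Prop :=
  ∃ (v₀ v₁ v₂ v₃ v₄ : Fin n) (i ℓ : α),
    v₀ ∈ S ∧ v₁ ∈ S ∧ v₂ ∈ S ∧ v₃ ∈ S ∧ v₄ ∈ S ∧ i ≠ ℓ ∧
    List.Pairwise (· ≠ ·) [v₀, v₁, v₂, v₃, v₄] ∧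
    col s(v₀, v₁) i ∧ col s(v₁, v₂) i ∧ col s(v₃, v₄) i ∧
    col s(v₂, v₃) ℓ ∧ col s(v₄, v₀) ℓ

/-- Bad subgraph of type (c): a 6-edge subgraph on 5 vertices with three distinct colors,
where color `i` forms a 2-edge path and colors `ℓ`, `m` each form 2-edge matchings,
containing a triangle whose edges use exactly two colors. -/
def TypeC {n : ℕ} {α : Type*} (col : Sym2 (Fin n) → α → Prop) (S : Finset (Fin n)) : Prop :=
  ∃ (a b d x y u v p q r w : Fin n) (i ℓ m : α),
    a ∈ S ∧ b ∈ S ∧ d ∈ S ∧ x ∈ S ∧ y ∈ S ∧ u ∈ S ∧ v ∈ S ∧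
    p ∈ S ∧ q ∈ S ∧ r ∈ S ∧ w ∈ S ∧
    i ≠ ℓ ∧ i ≠ m ∧ ℓ ≠ m ∧
    PathCol col i a b d ∧ MatchCol col ℓ x y u v ∧ MatchCol col m p q r w ∧
    TwoColTriIn ({(s(a, b), i), (s(b, d), i), (s(x, y), ℓ), (s(u, v), ℓ),
      (s(p, q), m), (s(r, w), m)} : Set (Sym2 (Fin n) × α))

/-- Bad subgraph of type (d): a 6-edge subgraph on 5 vertices with three distinct colors,
where one color forms a 2-edge matching and each of the other two forms a 2-edge path. -/
def TypeD {n : ℕ} {α : Type*} (col : Sym2 (Fin n) → α → Prop) (S : Finset (Fin n)) : Prop :=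
  ∃ (a b d a' b' d' x y u v : Fin n) (i ℓ m : α),
    a ∈ S ∧ b ∈ S ∧ d ∈ S ∧ a' ∈ S ∧ b' ∈ S ∧ d' ∈ S ∧
    x ∈ S ∧ y ∈ S ∧ u ∈ S ∧ v ∈ S ∧
    i ≠ ℓ ∧ i ≠ m ∧ ℓ ≠ m ∧
    PathCol col i a b d ∧ PathCol col ℓ a' b' d' ∧ MatchCol col m x y u v

/-- Bad subgraph of type (e): a 6-edge subgraph on 5 vertices with three distinct colors,
where two colors form 2-edge matchings and the third forms a 2-edge path, containing
no triangle colored with exactly two colors. -/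
def TypeE {n : ℕ} {α : Type*} (col : Sym2 (Fin n) → α → Prop) (S : Finset (Fin n)) : Prop :=
  ∃ (a b d x y u v p q r w : Fin n) (i ℓ m : α),
    a ∈ S ∧ b ∈ S ∧ d ∈ S ∧ x ∈ S ∧ y ∈ S ∧ u ∈ S ∧ v ∈ S ∧
    p ∈ S ∧ q ∈ S ∧ r ∈ S ∧ w ∈ S ∧
    i ≠ ℓ ∧ i ≠ m ∧ ℓ ≠ m ∧
    PathCol col i a b d ∧ MatchCol col ℓ x y u v ∧ MatchCol col m p q r w ∧
    ¬ TwoColTriIn ({(s(a, b), i), (s(b, d), i), (s(x, y), ℓ), (s(u, v), ℓ),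
      (s(p, q), m), (s(r, w), m)} : Set (Sym2 (Fin n) × α))

/-- Bad subgraph of type (f): a 6-edge subgraph on 5 vertices formed by three
monochromatic 2-edge matchings of three distinct colors. -/
def TypeF {n : ℕ} {α : Type*} (col : Sym2 (Fin n) → α → Prop) (S : Finset (Fin n)) : Prop :=
  ∃ (x₁ y₁ u₁ v₁ x₂ y₂ u₂ v₂ x₃ y₃ u₃ v₃ : Fin n) (i ℓ m : α),
    x₁ ∈ S ∧ y₁ ∈ S ∧ u₁ ∈ S ∧ v₁ ∈ S ∧ x₂ ∈ S ∧ y₂ ∈ S ∧ u₂ ∈ S ∧ v₂ ∈ S ∧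
    x₃ ∈ S ∧ y₃ ∈ S ∧ u₃ ∈ S ∧ v₃ ∈ S ∧
    i ≠ ℓ ∧ i ≠ m ∧ ℓ ≠ m ∧
    MatchCol col i x₁ y₁ u₁ v₁ ∧ MatchCol col ℓ x₂ y₂ u₂ v₂ ∧ MatchCol col m x₃ y₃ u₃ v₃

/-- Bad subgraph of type `t`, where `t = 0,1,2,3,4,5` codes types (a)-(f). -/
def BadOfType {n : ℕ} {α : Type*} (t : ℕ) (col : Sym2 (Fin n) → α → Prop)
    (S : Finset (Fin n)) : Prop :=
  if t = 0 then TypeA col S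
  else if t = 1 then TypeB col S
  else if t = 2 then TypeC col S
  else if t = 3 then TypeD col S
  else if t = 4 then TypeE col S
  else TypeF col S

/-!
Five vertices span ten edges, so if four of them had one colour they would carry at most seven
colours. Hence no colour class has four edges on five vertices. A component with at least five
vertices contains a connected set of five vertices, which spans at least four edges; so every
monochromatic component has at most four vertices, hence at most three edges, and a connected
graph with at most three edges is `K_2`, `P_3`, `P_4`, `K_{1,3}` or `K_3`.
-/

namespace SimpleGraph

variable {V W : Type*} {H : SimpleGraph V}

lemma Connected.exists_adj_of_mem_of_notMem (hH : H.Connected) {s : Set V} {a b : V}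
    (ha : a ∈ s) (hb : b ∉ s) : ∃ x ∈ s, ∃ y ∉ s, H.Adj x y := by
  obtain ⟨d, -, hd, hd'⟩ := (hH a b).some.exists_boundary_dart s ha hb
  exact ⟨_, hd, _, hd', d.adj⟩

lemma Connected.forall_mem_of_edgeSet_subset (hH : H.Connected) {s : Set V} {a : V}
    (ha : a ∈ s) (hs : H.edgeSet ⊆ s.sym2) (x : V) : x ∈ s := by
  by_contra hx
  obtain ⟨y, -, z, hz, hyz⟩ := hH.exists_adj_of_mem_of_notMem ha hx
  exact hz (Set.mk_mem_sym2_iff.mp (hs hyz)).2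

lemma exists_subset_ncard_eq_induce_connected {G : SimpleGraph V} {t : Set V}
    (ht : (G.induce t).Connected) (htf : t.Finite) {k : ℕ} (hk : 0 < k) (hkt : k ≤ t.ncard) :
    ∃ s ⊆ t, s.ncard = k ∧ (G.induce s).Connected := by
  induction k, hk using Nat.le_induction with
  | base =>
    obtain ⟨⟨v, hv⟩⟩ := ht.nonempty
    exact ⟨{v}, by simpa using hv, by simp, { preconnected := .of_subsingleton }⟩
  | succ k _ ih =>
    obtain ⟨s, hst, rfl, hs⟩ := ih (by omega)
    have hsf := htf.subset hst
    obtain ⟨⟨a, ha⟩⟩ := hs.nonempty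
    obtain ⟨b, hbt, hbs⟩ := Set.exists_mem_notMem_of_ncard_lt_ncard
      (by omega : s.ncard < t.ncard) hsf
    obtain ⟨x, hxs, y, hys, hxy⟩ := ht.exists_adj_of_mem_of_notMem (s := {z : t | z.1 ∈ s})
      (a := ⟨a, hst ha⟩) (b := ⟨b, hbt⟩) ha hbs
    refine ⟨s ∪ {y.1}, Set.union_subset hst (by simp), ?_, ?_⟩
    · rw [Set.union_singleton, Set.ncard_insert_of_notMem (show y.1 ∉ s from hys) hsf]
    · exact connected_induce_union hs.preconnected Preconnected.of_subsingleton hxs rfl hxy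

lemma nonempty_iso_of_bijective {P : SimpleGraph W} {f : W → V} (hf : f.Bijective)
    (hadj : ∀ i j, H.Adj (f i) (f j) ↔ P.Adj i j) : Nonempty (H ≃g P) :=
  ⟨(⟨.ofBijective f hf, hadj _ _⟩ : P ≃g H).symm⟩

variable {a b c d : V}

lemma nonempty_iso_pathGraph_two (hV : ∀ x, x = a ∨ x = b) (hab : H.Adj a b) :
    Nonempty (H ≃g pathGraph 2) := by
  refine nonempty_iso_of_bijective (f := ![a, b]) ⟨fun i j hij => ?_, fun x => ?_⟩ fun i j => ?_
  · fin_cases i <;> fin_cases j <;> simp_all [hab.ne, hab.ne.symm]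
  · rcases hV x with rfl | rfl
    exacts [⟨0, rfl⟩, ⟨1, rfl⟩]
  · fin_cases i <;> fin_cases j <;> simp [hab, hab.symm, pathGraph_adj]

lemma nonempty_iso_pathGraph_three (hV : ∀ x, x = a ∨ x = b ∨ x = c) (hab : H.Adj a b)
    (hbc : H.Adj b c) (hac : a ≠ c) (hnac : ¬ H.Adj a c) : Nonempty (H ≃g pathGraph 3) := by
  refine nonempty_iso_of_bijective (f := ![a, b, c]) ⟨fun i j hij => ?_, fun x => ?_⟩
    fun i j => ?_
  · fin_cases i <;> fin_cases j <;> simp_all [hab.ne, hab.ne.symm, hbc.ne, hbc.ne.symm, hac.symm]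
  · rcases hV x with rfl | rfl | rfl
    exacts [⟨0, rfl⟩, ⟨1, rfl⟩, ⟨2, rfl⟩]
  · fin_cases i <;> fin_cases j <;>
      simp [hab, hab.symm, hbc, hbc.symm, hnac, H.adj_comm c a, pathGraph_adj]

lemma nonempty_iso_top_fin_three (hV : ∀ x, x = a ∨ x = b ∨ x = c) (hab : H.Adj a b)
    (hbc : H.Adj b c) (hac : H.Adj a c) : Nonempty (H ≃g (⊤ : SimpleGraph (Fin 3))) := by
  refine nonempty_iso_of_bijective (f := ![a, b, c]) ⟨fun i j hij => ?_, fun x => ?_⟩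
    fun i j => ?_
  · fin_cases i <;> fin_cases j <;>
      simp_all [hab.ne, hab.ne.symm, hbc.ne, hbc.ne.symm, hac.ne, hac.ne.symm]
  · rcases hV x with rfl | rfl | rfl
    exacts [⟨0, rfl⟩, ⟨1, rfl⟩, ⟨2, rfl⟩]
  · fin_cases i <;> fin_cases j <;> simp [hab, hab.symm, hbc, hbc.symm, hac, hac.symm]

lemma Connected.nonempty_iso_pathGraph_four (hH : H.Connected) (hd : [a, b, c, d].Nodup)
    (hE : H.edgeSet = {s(a, b), s(b, c), s(c, d)}) : Nonempty (H ≃g pathGraph 4) := by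
  have hV := hH.forall_mem_of_edgeSet_subset (s := {a, b, c, d}) (a := a) (by simp)
    (by simp [hE, Set.insert_subset_iff])
  simp only [List.nodup_cons, List.mem_cons, List.not_mem_nil] at hd
  refine nonempty_iso_of_bijective (f := ![a, b, c, d]) ⟨fun i j hij => ?_, fun x => ?_⟩
    fun i j => ?_
  · fin_cases i <;> fin_cases j <;> simp_all [eq_comm]
  · rcases hV x with rfl | rfl | rfl | rfl
    exacts [⟨0, rfl⟩, ⟨1, rfl⟩, ⟨2, rfl⟩, ⟨3, rfl⟩]
  · rw [← mem_edgeSet, hE]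
    fin_cases i <;> fin_cases j <;> simp [pathGraph_adj] <;> tauto

lemma Connected.nonempty_iso_starK13 (hH : H.Connected) (hd : [a, b, c, d].Nodup)
    (hE : H.edgeSet = {s(a, b), s(a, c), s(a, d)}) : Nonempty (H ≃g starK13) := by
  have hV := hH.forall_mem_of_edgeSet_subset (s := {a, b, c, d}) (a := a) (by simp)
    (by simp [hE, Set.insert_subset_iff])
  simp only [List.nodup_cons, List.mem_cons, List.not_mem_nil] at hd
  refine nonempty_iso_of_bijective (f := Sum.elim (fun _ => a) ![b, c, d])
    ⟨fun i j hij => ?_, fun x => ?_⟩ fun i j => ?_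
  · rcases i with i | i <;> rcases j with j | j <;> fin_cases i <;> fin_cases j <;>
      simp_all [eq_comm]
  · rcases hV x with rfl | rfl | rfl | rfl
    exacts [⟨.inl 0, rfl⟩, ⟨.inr 0, rfl⟩, ⟨.inr 1, rfl⟩, ⟨.inr 2, rfl⟩]
  · rw [← mem_edgeSet, hE]
    rcases i with i | i <;> rcases j with j | j <;> fin_cases i <;> fin_cases j <;>
      simp [starK13] <;> tauto

lemma Connected.nonempty_iso_of_ncard_edgeSet_le_three_of_adj_of_adj [Finite V]
    (hH : H.Connected) (h3 : H.edgeSet.ncard ≤ 3) (hab : H.Adj a b) (hbc : H.Adj b c)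
    (hac : a ≠ c) :
    Nonempty (H ≃g pathGraph 3) ∨ Nonempty (H ≃g pathGraph 4) ∨ Nonempty (H ≃g starK13) ∨
      Nonempty (H ≃g (⊤ : SimpleGraph (Fin 3))) := by
  by_cases hV : ∀ x, x = a ∨ x = b ∨ x = c
  · by_cases hac' : H.Adj a c
    · exact .inr <| .inr <| .inr <| nonempty_iso_top_fin_three hV hab hbc hac'
    · exact .inl <| nonempty_iso_pathGraph_three hV hab hbc hac hac'
  obtain ⟨x, hx⟩ := not_forall.mp hV
  obtain ⟨y, hy, z, hz, hyz⟩ :=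
    hH.exists_adj_of_mem_of_notMem (s := {a, b, c}) (a := a) (by simp) hx
  simp only [Set.mem_insert_iff, Set.mem_singleton_iff, not_or] at hz
  have hab' := hab.ne
  have hbc' := hbc.ne
  have hE : H.edgeSet = {s(a, b), s(b, c), s(y, z)} := by
    refine (Set.eq_of_subset_of_ncard_le ?_ ?_ (Set.toFinite _)).symm
    · simp [Set.insert_subset_iff, hab, hbc, hyz]
    · rw [Set.ncard_eq_three.mpr ⟨_, _, _, ?_, ?_, ?_, rfl⟩]
      · exact h3
      all_goals simp; tauto
  rcases hy with rfl | rfl | rfl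
  · refine .inr <| .inl <|
      hH.nonempty_iso_pathGraph_four (a := z) (b := y) (c := b) (d := c) ?_ ?_
    · simp; tauto
    · rw [hE]; ext e; simp [Sym2.eq_swap]; tauto
  · refine .inr <| .inr <| .inl <|
      hH.nonempty_iso_starK13 (a := y) (b := a) (c := c) (d := z) ?_ ?_
    · simp; tauto
    · rw [hE, Sym2.eq_swap (a := a)]
  · refine .inr <| .inl <|
      hH.nonempty_iso_pathGraph_four (a := a) (b := b) (c := y) (d := z) ?_ hE
    simp; tauto

theorem Connected.nonempty_iso_of_ncard_edgeSet_le_three [Finite V] (hH : H.Connected)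
    (h3 : H.edgeSet.ncard ≤ 3) (hab : H.Adj a b) :
    Nonempty (H ≃g pathGraph 2) ∨ Nonempty (H ≃g pathGraph 3) ∨ Nonempty (H ≃g pathGraph 4) ∨
      Nonempty (H ≃g starK13) ∨ Nonempty (H ≃g (⊤ : SimpleGraph (Fin 3))) := by
  by_cases hV : ∀ x, x = a ∨ x = b
  · exact .inl <| nonempty_iso_pathGraph_two hV hab
  obtain ⟨x, hx⟩ := not_forall.mp hV
  obtain ⟨y, hy, z, hz, hyz⟩ :=
    hH.exists_adj_of_mem_of_notMem (s := {a, b}) (a := a) (by simp) hx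
  simp only [Set.mem_insert_iff, Set.mem_singleton_iff, not_or] at hz
  rcases hy with rfl | rfl
  · exact .inr <| hH.nonempty_iso_of_ncard_edgeSet_le_three_of_adj_of_adj h3 hab.symm hyz
      (Ne.symm hz.2)
  · exact .inr <| hH.nonempty_iso_of_ncard_edgeSet_le_three_of_adj_of_adj h3 hab hyz
      (Ne.symm hz.1)

end SimpleGraph

lemma ncard_colors_add_ncard_monochromatic_le {V α : Type*} [DecidableEq V] (c : Sym2 V → α)
    (i : α) (S : Finset V) {E : Set (Sym2 V)} (hES : E ⊆ ↑(S.offDiag.image Sym2.mk.uncurry))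
    (hEi : ∀ e ∈ E, c e = i) :
    {j : α | ∃ x ∈ S, ∃ y ∈ S, x ≠ y ∧ c s(x, y) = j}.ncard + E.ncard ≤
      S.card.choose 2 + 1 := by
  set P : Set (Sym2 V) := ↑(S.offDiag.image Sym2.mk.uncurry)
  have hcolors :
      {j : α | ∃ x ∈ S, ∃ y ∈ S, x ≠ y ∧ c s(x, y) = j} ⊆ insert i (c '' (P \ E)) := by
    rintro _ ⟨x, hx, y, hy, hxy, rfl⟩
    by_cases he : s(x, y) ∈ E
    · exact .inl (hEi _ he)
    · exact .inr ⟨_, ⟨Finset.mem_image.2 ⟨(x, y), by simp [hx, hy, hxy], rfl⟩, he⟩, rfl⟩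
  have hEf : E.Finite := (Finset.finite_toSet _).subset hES
  have hP : P.ncard = S.card.choose 2 := by
    rw [Set.ncard_coe_finset, Sym2.card_image_offDiag]
  calc _ ≤ (insert i (c '' (P \ E))).ncard + E.ncard := by
        have := Set.ncard_le_ncard hcolors
        omega
    _ ≤ (P \ E).ncard + 1 + E.ncard := by
        gcongr
        exact (Set.ncard_insert_le _ _).trans
          (by gcongr; exact Set.ncard_image_le ((Finset.finite_toSet _).sdiff))
    _ = S.card.choose 2 + 1 := by
        rw [Set.ncard_sdiff hES hEf, hP]
        have := Set.ncard_le_ncard hES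
        omega

lemma IsPQColoring.ncard_edgeSet_induce_add_le {n : ℕ} {α : Type*} {p q : ℕ}
    {c : Sym2 (Fin n) → α} (hc : IsPQColoring p q c) (hpn : p ≤ n) (i : α) {s : Set (Fin n)}
    (hs : s.ncard ≤ p) :
    ((colorClass c i).induce s).edgeSet.ncard + q ≤ p.choose 2 + 1 := by
  classical
  obtain ⟨S, hsS, hS⟩ := Finset.exists_superset_card_eq (s := s.toFinset) (n := p)
    (by rwa [← Set.ncard_eq_toFinset_card']) (by simpa using hpn)
  set E := Sym2.map Subtype.val '' ((colorClass c i).induce s).edgeSet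
  have hES : E ⊆ ↑(S.offDiag.image Sym2.mk.uncurry) := by
    rintro _ ⟨e, he, rfl⟩
    induction e using Sym2.ind with
    | _ x y =>
      have hxy : (colorClass c i).Adj x y := he
      refine Finset.mem_image.2 ⟨(x, y), ?_, rfl⟩
      simp [hsS (Set.mem_toFinset.2 x.2), hsS (Set.mem_toFinset.2 y.2), hxy.ne]
  have hEi : ∀ e ∈ E, c e = i := by
    rintro _ ⟨e, he, rfl⟩
    induction e using Sym2.ind with
    | _ x y => exact (show (colorClass c i).Adj x y from he).2
  have hcount := ncard_colors_add_ncard_monochromatic_le c i S hES hEi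
  rw [Set.ncard_image_of_injective _ (Sym2.map.injective Subtype.val_injective), hS] at hcount
  have := hc S hS
  omega

lemma IsPQColoring.ncard_supp_lt {n : ℕ} {α : Type*} {p q : ℕ} {c : Sym2 (Fin n) → α}
    (hc : IsPQColoring p q c) (hpn : p ≤ n) (hpq : p.choose 2 + 2 < p + q) (i : α)
    (K : (colorClass c i).ConnectedComponent) : K.supp.ncard < p := by
  by_contra! hK
  obtain rfl | hp := Nat.eq_zero_or_pos p
  · have := hc ∅ rfl
    simp at this hpq
    omega
  obtain ⟨s, -, hs, hconn⟩ := exists_subset_ncard_eq_induce_connected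
    (ConnectedComponent.maximal_connected_induce_supp K).prop (Set.toFinite _) hp hK
  have hvert := hconn.card_vert_le_card_edgeSet_add_one
  have hedge := hc.ncard_edgeSet_induce_add_le hpn i hs.le
  rw [Nat.card_coe_set_eq, Nat.card_coe_set_eq] at hvert
  omega

/-- In a `(5,8)`-coloring of `K_n` (`n ≥ 5`), every connected component of
every color class containing at least one edge has at most 3 edges, and is isomorphic to one
of `K_2`, `P_3`, `P_4`, `K_{1,3}`, `K_3`. -/
theorem components_of_color_classes {n : ℕ} {α : Type*} (hn : 5 ≤ n)
    (c : Sym2 (Fin n) → α) (hc : IsPQColoring 5 8 c) :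
    ∀ (i : α) (K : (colorClass c i).ConnectedComponent),
      CompHasEdge (colorClass c i) K →
      ((colorClass c i).induce K.supp).edgeSet.ncard ≤ 3 ∧
      (ComponentIso (colorClass c i) K (pathGraph 2) ∨
       ComponentIso (colorClass c i) K (pathGraph 3) ∨
       ComponentIso (colorClass c i) K (pathGraph 4) ∨
       ComponentIso (colorClass c i) K starK13 ∨
       ComponentIso (colorClass c i) K (⊤ : SimpleGraph (Fin 3))) := by
  rintro i K ⟨u, v, hu, huv⟩
  have hsupp : K.supp.ncard < 5 := hc.ncard_supp_lt hn (by decide) i K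
  have hE : ((colorClass c i).induce K.supp).edgeSet.ncard ≤ 3 := by
    have := hc.ncard_edgeSet_induce_add_le hn i hsupp.le
    simp [Nat.choose] at this
    omega
  have hK := (ConnectedComponent.maximal_connected_induce_supp K).prop
  exact ⟨hE, hK.nonempty_iso_of_ncard_edgeSet_le_three hE (a := ⟨u, hu⟩)
    (b := ⟨v, K.mem_supp_of_adj_mem_supp hu huv⟩) huv⟩
end

section
/- Let n ≥ 5 and let c be a (5,8)-coloring of K_n. Suppose three vertices x, y, z are such that the edges xy, yz, xz all receive the same color i (a monochromatic triangle). Then no edge other than xy, yz, xz has color i, and the 3(n−3) edges joining {x,y,z} to the remaining n−3 vertices receive pairwise distinct colors, each distinct from i. -/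
open SimpleGraph

/-!
Five vertices `x, y, z, u, v` span ten edges, three of which (the triangle) have colour `i`.
Since they must show eight colours, the other seven edges — the six joining `{x, y, z}` to
`{u, v}` and the edge `uv` — have pairwise distinct colours, none equal to `i`. As `n ≥ 5`,
every edge leaving the triangle or avoiding it, and every pair of edges leaving it, lies among
these seven edges for a suitable choice of `u, v`.
-/

open Finset

theorem injOn_and_notMem_of_le_card_insert_image {β α : Type*} [DecidableEq α] {f : β → α}
    {s : Finset β} {i : α} {k : ℕ} (hs : #s ≤ k) (h : k + 1 ≤ #(insert i (s.image f))) :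
    Set.InjOn f s ∧ i ∉ s.image f := by
  have himage : #(s.image f) ≤ #s := card_image_le
  have hinsert := card_insert_le i (s.image f)
  refine ⟨card_image_iff.mp (by omega), fun hi => ?_⟩
  rw [insert_eq_of_mem hi] at h
  omega

theorem Finset.exists_pair_notMem_of_card_add_two_le {n : ℕ} (T : Finset (Fin n))
    (hT : #T + 2 ≤ n) {v v' : Fin n} (hv : v ∉ T) (hv' : v' ∉ T) :
    ∃ u w, u ∉ T ∧ w ∉ T ∧ u ≠ w ∧ v ∈ ({u, w} : Finset (Fin n)) ∧
      v' ∈ ({u, w} : Finset (Fin n)) := by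
  by_cases hvv' : v = v'
  · subst hvv'
    have hlt : #(insert v T) < #(univ : Finset (Fin n)) := by
      rw [card_univ, Fintype.card_fin]
      exact (card_insert_le v T).trans_lt (by omega)
    obtain ⟨w, -, hw⟩ := exists_mem_notMem_of_card_lt_card hlt
    rw [mem_insert, not_or] at hw
    exact ⟨v, w, hv, hw.2, Ne.symm hw.1, by simp, by simp⟩
  · exact ⟨v, v', hv, hv', hvv', by simp, by simp⟩

section CrossEdges

def crossEdges {n : ℕ} (T : Finset (Fin n)) (u v : Fin n) : Finset (Sym2 (Fin n)) :=
  insert s(u, v) ((T ×ˢ {u, v}).image fun p => s(p.1, p.2))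

variable {n : ℕ} {α : Type*} {T : Finset (Fin n)} {u v : Fin n}

theorem mk_mem_crossEdges {a b : Fin n} (ha : a ∈ T) (hb : b ∈ ({u, v} : Finset (Fin n))) :
    s(a, b) ∈ crossEdges T u v :=
  mem_insert_of_mem (mem_image.mpr ⟨(a, b), mem_product.mpr ⟨ha, hb⟩, rfl⟩)

theorem exists_mk_mem_crossEdges (hT : #T + 2 ≤ n) {a b : Fin n} (hab : a ≠ b)
    (h : ¬(a ∈ T ∧ b ∈ T)) : ∃ u v, u ∉ T ∧ v ∉ T ∧ u ≠ v ∧ s(a, b) ∈ crossEdges T u v := by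
  by_cases ha : a ∈ T
  · have hb : b ∉ T := fun hb => h ⟨ha, hb⟩
    obtain ⟨u, v, hu, hv, huv, hb', -⟩ := T.exists_pair_notMem_of_card_add_two_le hT hb hb
    exact ⟨u, v, hu, hv, huv, mk_mem_crossEdges ha hb'⟩
  by_cases hb : b ∈ T
  · obtain ⟨u, v, hu, hv, huv, ha', -⟩ := T.exists_pair_notMem_of_card_add_two_le hT ha ha
    exact ⟨u, v, hu, hv, huv, Sym2.eq_swap ▸ mk_mem_crossEdges hb ha'⟩
  · exact ⟨a, b, ha, hb, hab, mem_insert_self _ _⟩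

variable (T u v) in
theorem card_crossEdges_le : #(crossEdges T u v) ≤ 2 * #T + 1 := by
  have hpair : #({u, v} : Finset (Fin n)) ≤ 2 := card_le_two
  calc #(crossEdges T u v) ≤ #((T ×ˢ {u, v}).image fun p => s(p.1, p.2)) + 1 :=
        card_insert_le _ _
    _ ≤ #T * #({u, v} : Finset (Fin n)) + 1 := by
        gcongr
        exact card_image_le.trans (card_product _ _).le
    _ ≤ 2 * #T + 1 := by nlinarith

theorem spannedColors_subset_insert_image_crossEdges {c : Sym2 (Fin n) → α} {i : α}
    [DecidableEq α] (hT : ∀ a ∈ T, ∀ b ∈ T, a ≠ b → c s(a, b) = i) :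
    {j | ∃ a ∈ insert u (insert v T), ∃ b ∈ insert u (insert v T), a ≠ b ∧ c s(a, b) = j} ⊆
      ↑(insert i ((crossEdges T u v).image c)) := by
  rintro j ⟨a, ha, b, hb, hab, rfl⟩
  rw [coe_insert, coe_image, Set.mem_insert_iff, Set.mem_image]
  have hpair : ∀ {w}, w ∈ insert u (insert v T) → w ∉ T → w ∈ ({u, v} : Finset (Fin n)) := by
    intro w hw hwT
    simp only [mem_insert, mem_singleton] at hw ⊢
    tauto
  by_cases haT : a ∈ T <;> by_cases hbT : b ∈ T
  · exact .inl (hT a haT b hbT hab)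
  · exact .inr ⟨_, mk_mem_crossEdges haT (hpair hb hbT), rfl⟩
  · exact .inr ⟨_, mk_mem_crossEdges hbT (hpair ha haT), by rw [Sym2.eq_swap]⟩
  · refine .inr ⟨s(a, b), mem_coe.mpr ?_, rfl⟩
    have ha' := hpair ha haT
    have hb' := hpair hb hbT
    simp only [mem_insert, mem_singleton] at ha' hb'
    rcases ha' with rfl | rfl <;> rcases hb' with rfl | rfl
    all_goals first
      | exact absurd rfl hab
      | exact mem_insert_self _ _
      | exact Sym2.eq_swap ▸ mem_insert_self _ _

/-- The `2t + 2` colours (`t = #T`) are `i` plus one for each of the `2t + 1` cross edges. -/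
theorem injOn_crossEdges_of_monochromatic {c : Sym2 (Fin n) → α} {i : α}
    (hc : IsPQColoring (#T + 2) (2 * #T + 2) c)
    (hT : ∀ a ∈ T, ∀ b ∈ T, a ≠ b → c s(a, b) = i) (hu : u ∉ T) (hv : v ∉ T) (huv : u ≠ v) :
    Set.InjOn c (crossEdges T u v) ∧ ∀ e ∈ crossEdges T u v, c e ≠ i := by
  classical
  have hS : #(insert u (insert v T)) = #T + 2 := by
    rw [card_insert_of_notMem (by simp [huv, hu]), card_insert_of_notMem hv]
  have hcolors := (hc _ hS).trans
    (Set.ncard_le_ncard (spannedColors_subset_insert_image_crossEdges hT) (finite_toSet _))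
  rw [Set.ncard_coe_finset] at hcolors
  obtain ⟨hinj, hi⟩ :=
    injOn_and_notMem_of_le_card_insert_image (card_crossEdges_le T u v) (by omega)
  exact ⟨hinj, fun e he hce => hi (hce ▸ mem_image_of_mem c he)⟩

end CrossEdges

/-- In a `(5,8)`-coloring of `K_n` (`n ≥ 5`), if `xy`, `yz`, `xz` all have
color `i` (a monochromatic triangle), then no other edge has color `i`, no edge joining
`{x,y,z}` to the remaining vertices has color `i`, and the edges joining `{x,y,z}` to the
remaining vertices receive pairwise distinct colors. -/
theorem mono_triangle_structure {n : ℕ} {α : Type*} (hn : 5 ≤ n)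
    (c : Sym2 (Fin n) → α) (hc : IsPQColoring 5 8 c)
    (x y z : Fin n) (i : α) (hxy : x ≠ y) (hyz : y ≠ z) (hxz : x ≠ z)
    (h1 : c s(x, y) = i) (h2 : c s(y, z) = i) (h3 : c s(x, z) = i) :
    (∀ u v : Fin n, u ≠ v → c s(u, v) = i →
      s(u, v) = s(x, y) ∨ s(u, v) = s(y, z) ∨ s(u, v) = s(x, z)) ∧
    (∀ u v : Fin n, u ∈ ({x, y, z} : Set (Fin n)) → v ∉ ({x, y, z} : Set (Fin n)) →
      c s(u, v) ≠ i) ∧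
    (∀ u v u' v' : Fin n, u ∈ ({x, y, z} : Set (Fin n)) → v ∉ ({x, y, z} : Set (Fin n)) →
      u' ∈ ({x, y, z} : Set (Fin n)) → v' ∉ ({x, y, z} : Set (Fin n)) →
      s(u, v) ≠ s(u', v') → c s(u, v) ≠ c s(u', v')) := by
  set T : Finset (Fin n) := {x, y, z}
  have hmemT : ∀ a, a ∈ ({x, y, z} : Set (Fin n)) ↔ a ∈ T := fun a => by simp [T]
  have hcard : #T = 3 := by simp [T, hxy, hyz, hxz]
  have hmono : ∀ a ∈ T, ∀ b ∈ T, a ≠ b → c s(a, b) = i := by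
    simp only [T, mem_insert, mem_singleton]
    rintro a (rfl | rfl | rfl) b (rfl | rfl | rfl) hab <;> simp_all [Sym2.eq_swap]
  have hroom : #T + 2 ≤ n := by omega
  have hkey (u v : Fin n) (hu : u ∉ T) (hv : v ∉ T) (huv : u ≠ v) :=
    injOn_crossEdges_of_monochromatic (by rwa [hcard]) hmono hu hv huv
  refine ⟨fun a b hab hcab => ?_, fun a b ha hb hcab => ?_,
    fun a b a' b' ha hb ha' hb' hne => ?_⟩
  · by_cases hmem : a ∈ T ∧ b ∈ T
    · obtain ⟨ha, hb⟩ := hmem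
      simp only [T, mem_insert, mem_singleton] at ha hb
      rcases ha with rfl | rfl | rfl <;> rcases hb with rfl | rfl | rfl <;>
        simp_all [Sym2.eq_swap]
    · obtain ⟨u, v, hu, hv, huv, he⟩ := exists_mk_mem_crossEdges hroom hab hmem
      exact absurd hcab ((hkey u v hu hv huv).2 _ he)
  · rw [hmemT] at ha hb
    obtain ⟨u, v, hu, hv, huv, he⟩ :=
      exists_mk_mem_crossEdges hroom (ne_of_mem_of_not_mem ha hb) (fun h => hb h.2)
    exact (hkey u v hu hv huv).2 _ he hcab
  · rw [hmemT] at ha hb ha' hb'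
    obtain ⟨u, v, hu, hv, huv, hbuv, hbuv'⟩ :=
      T.exists_pair_notMem_of_card_add_two_le hroom hb hb'
    exact fun h => hne ((hkey u v hu hv huv).1 (mk_mem_crossEdges ha hbuv)
      (mk_mem_crossEdges ha' hbuv') h)
end

section
/- Let n ≥ 5 and let c be a (5,8)-coloring of K_n using m colors. If some color class of c contains a triangle (three vertices with all three edges of the same color), then m ≥ 3(n−3) + 1. -/
open SimpleGraph

/-! Let `xyz` be a monochromatic triangle. For any two further vertices `v`, `w`, the ten edges
on `{x, y, z, v, w}` carry at least eight colors, while the three triangle edges share one; so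
the other eight edges, `xy` among them, have pairwise distinct colors. Any two of the `3(n-3)`
edges between the triangle and the rest of the graph lie in such a `5`-set, hence they and `xy`
receive `3(n-3) + 1` distinct colors. -/

open Finset

theorem IsPQColoring.injOn_of_card_le {n p q : ℕ} {α : Type*} {c : Sym2 (Fin n) → α}
    (hc : IsPQColoring p q c) {S : Finset (Fin n)} (hS : #S = p)
    {E : Finset (Sym2 (Fin n))} (hE : #E ≤ q)
    (hcov : ∀ x ∈ S, ∀ y ∈ S, x ≠ y → ∃ e ∈ E, c e = c s(x, y)) : Set.InjOn c E := by
  classical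
  have hsub : {j : α | ∃ x ∈ S, ∃ y ∈ S, x ≠ y ∧ c s(x, y) = j} ⊆ ↑(E.image c) := by
    rintro _ ⟨x, hx, y, hy, hxy, rfl⟩
    simpa using hcov x hx y hy hxy
  have hcard : #E ≤ #(E.image c) := calc
    #E ≤ q := hE
    _ ≤ _ := hc S hS
    _ ≤ (↑(E.image c) : Set α).ncard := Set.ncard_le_ncard hsub (Finset.finite_toSet _)
    _ = #(E.image c) := Set.ncard_coe_finset _
  exact card_image_iff.mp (le_antisymm card_image_le hcard)

theorem IsPQColoring.injOn_of_monoTriangle {n : ℕ} {α : Type*} {c : Sym2 (Fin n) → α}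
    (hc : IsPQColoring 5 8 c) {x y z v w : Fin n} (hd : [x, y, z, v, w].Nodup)
    (hxy : c s(x, y) = c s(y, z)) (hyz : c s(y, z) = c s(x, z)) :
    Set.InjOn c ({s(x, y), s(v, x), s(v, y), s(v, z), s(w, x), s(w, y), s(w, z), s(v, w)} :
      Finset (Sym2 (Fin n))) := by
  simp only [List.nodup_cons, List.mem_cons, List.not_mem_nil, or_false, not_or,
    List.nodup_nil, and_true] at hd
  refine hc.injOn_of_card_le (S := {x, y, z, v, w}) ?_ ?_ ?_
  · rw [card_insert_of_notMem, card_insert_of_notMem, card_insert_of_notMem,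
      card_insert_of_notMem] <;> simp_all
  · exact (List.toFinset_card_le [s(x, y), s(v, x), s(v, y), s(v, z), s(w, x), s(w, y),
      s(w, z), s(v, w)]).trans_eq' (by simp)
  · intro a ha b hb hab
    simp only [mem_insert, mem_singleton] at ha hb
    rcases ha with ha | ha | ha | ha | ha <;> rcases hb with hb | hb | hb | hb | hb <;>
      rw [ha, hb] at hab ⊢ <;>
      first
        | exact absurd rfl hab
        | (refine ⟨_, ?_, rfl⟩; simp [Sym2.eq_swap]; done)
        | (refine ⟨s(x, y), by simp, ?_⟩; simp [Sym2.eq_swap, hxy, hyz])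

section crossEdge

variable {V : Type*}

abbrev CrossIndex (R : Finset V) : Type _ := Option ({u // u ∉ R} × R)

theorem card_crossIndex [Fintype V] [DecidableEq V] (R : Finset V) :
    Fintype.card (CrossIndex R) = (Fintype.card V - #R) * #R + 1 := by
  rw [Fintype.card_option, Fintype.card_prod, Fintype.card_subtype_compl, Fintype.card_coe]

def crossEdge (x y : V) (R : Finset V) : CrossIndex R → Sym2 V
  | none => s(x, y)
  | some (u, a) => s(u.1, a.1)

theorem crossEdge_injective {x y : V} {R : Finset V} (hx : x ∈ R) (hy : y ∈ R) :
    Function.Injective (crossEdge x y R) := by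
  have hne : ∀ u ∉ R, ∀ a, s(x, y) ≠ s(u, a) := fun u hu a h ↦ by
    rcases Sym2.mem_iff.mp (h ▸ Sym2.mem_mk_left u a) with rfl | rfl <;> contradiction
  rintro (_ | ⟨⟨u, hu⟩, ⟨a, ha⟩⟩) (_ | ⟨⟨u', hu'⟩, ⟨a', ha'⟩⟩) h
  · rfl
  · exact absurd h (hne u' hu' a')
  · exact absurd h.symm (hne u hu a)
  · rcases Sym2.eq_iff.mp h with ⟨rfl, rfl⟩ | ⟨rfl, rfl⟩
    · rfl
    · exact absurd ha' hu

theorem crossEdge_mem [DecidableEq V] {x y z v w : V}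
    (o : CrossIndex ({x, y, z} : Finset V))
    (ho : (o.map (·.1.1)).toFinset ⊆ {v, w}) :
    crossEdge x y {x, y, z} o ∈ ({s(x, y), s(v, x), s(v, y), s(v, z), s(w, x), s(w, y),
      s(w, z), s(v, w)} : Finset (Sym2 V)) := by
  rcases o with _ | ⟨u, ⟨a, ha⟩⟩
  · simp [crossEdge]
  · simp only [Option.map_some, Option.toFinset_some, singleton_subset_iff, mem_insert,
      mem_singleton] at ho ha
    rcases ho with h | h <;> rcases ha with ha | ha | ha <;> simp [crossEdge, h, ha]

end crossEdge

theorem IsPQColoring.injective_comp_crossEdge {n : ℕ} {α : Type*} {c : Sym2 (Fin n) → α}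
    (hc : IsPQColoring 5 8 c) (hn : 5 ≤ n) {x y z : Fin n} (hxy : x ≠ y) (hyz : y ≠ z)
    (hxz : x ≠ z) (hc₁ : c s(x, y) = c s(y, z)) (hc₂ : c s(y, z) = c s(x, z)) :
    Function.Injective (c ∘ crossEdge x y {x, y, z}) := by
  intro o₁ o₂ h
  let ends : CrossIndex ({x, y, z} : Finset (Fin n)) → Finset (Fin n) :=
    fun o ↦ (o.map (·.1.1)).toFinset
  have hends : ∀ o, ends o ⊆ {x, y, z}ᶜ ∧ #(ends o) ≤ 1 := by
    rintro (_ | ⟨⟨u, hu⟩, a⟩)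
    · simp [ends]
    · simpa [ends] using hu
  have hR : #({x, y, z} : Finset (Fin n)) = 3 := card_eq_three.mpr ⟨x, y, z, hxy, hxz, hyz, rfl⟩
  obtain ⟨U, hsub, hUR, hU⟩ := exists_subsuperset_card_eq (n := 2)
    (union_subset (hends o₁).1 (hends o₂).1)
    ((card_union_le _ _).trans (by linarith [(hends o₁).2, (hends o₂).2]))
    (by rw [card_compl, Fintype.card_fin, hR]; omega)
  obtain ⟨v, w, hvw, rfl⟩ := card_eq_two.mp hU
  have hd : [x, y, z, v, w].Nodup := by
    simp only [insert_subset_iff, singleton_subset_iff, mem_compl, mem_insert,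
      mem_singleton] at hUR
    simp only [List.nodup_cons, List.mem_cons, List.not_mem_nil, List.nodup_nil]
    tauto
  exact crossEdge_injective (by simp) (by simp) <| hc.injOn_of_monoTriangle hd hc₁ hc₂
    (crossEdge_mem _ (subset_union_left.trans hsub))
    (crossEdge_mem _ (subset_union_right.trans hsub)) h

/-- If a `(5,8)`-coloring of `K_n` (`n ≥ 5`) with `m` colors has a
monochromatic triangle, then `m ≥ 3(n−3)+1`. -/
theorem mono_triangle_many_colors {n m : ℕ} (hn : 5 ≤ n)
    (c : Sym2 (Fin n) → Fin m) (hc : IsPQColoring 5 8 c)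
    (htri : HasMonoTriangle c) :
    3 * (n - 3) + 1 ≤ m := by
  obtain ⟨x, y, z, hxy, hyz, hxz, hc₁, hc₂⟩ := htri
  have hR : #({x, y, z} : Finset (Fin n)) = 3 := card_eq_three.mpr ⟨x, y, z, hxy, hxz, hyz, rfl⟩
  calc 3 * (n - 3) + 1 = Fintype.card (CrossIndex ({x, y, z} : Finset (Fin n))) := by
        rw [card_crossIndex, Fintype.card_fin, hR, mul_comm]
    _ ≤ m := by
      simpa using Fintype.card_le_of_injective _
        (hc.injective_comp_crossEdge hn hxy hyz hxz hc₁ hc₂)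
end

section
/- Let n ≥ 5 and let c be a (5,8)-coloring of K_n with m colors and with no monochromatic triangle. Then binom(n,2) = |A| + 2|B| + 3|C| + 3|D|, where B = B_1 ∪ B_2. -/
open SimpleGraph

/-!
Five vertices span ten edges, which a `(5,8)`-coloring paints with at least eight colors, so no
color class has four edges on five vertices. Hence a monochromatic component contains no `K_{1,4}`,
no `K_{1,3}` with an edge hanging off a leaf, no `P_5` and no `C_4`, and by assumption no triangle;
the only connected graphs left are `K_2`, `P_3`, `P_4` and `K_{1,3}`, with `1`, `2`, `3` and `3`
edges. Every edge of `K_n` lies in exactly one monochromatic component, so counting the edges of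
`K_n` component by component gives the identity; `B₁` and `B₂` partition `B`.
-/

open Finset

namespace SimpleGraph

variable {V : Type*} {G : SimpleGraph V}

lemma Reachable.mem_of_adj_closed {S : Set V} (hS : ∀ x ∈ S, ∀ y, G.Adj x y → y ∈ S)
    {u v : V} (huv : G.Reachable u v) (hu : u ∈ S) : v ∈ S := by
  obtain ⟨p⟩ := huv
  induction p with
  | nil => exact hu
  | cons h _ ih => exact ih (hS _ hu _ h)

def AtMostThreeEdgesOnFiveVertices (G : SimpleGraph V) : Prop :=
  ∀ s : Finset V, s.card ≤ 5 → ∀ F : Finset (Sym2 V), ↑F ⊆ G.edgeSet → F ⊆ s.sym2 → F.card ≤ 3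

lemma AtMostThreeEdgesOnFiveVertices.not_nodup [DecidableEq V]
    (hG : G.AtMostThreeEdgesOnFiveVertices) {s : List V} {F : List (Sym2 V)}
    (hs : s.length ≤ 5) (hF : 3 < F.length) (hE : ∀ e ∈ F, e ∈ G.edgeSet ∧ ∀ v ∈ e, v ∈ s) :
    ¬ F.Nodup := by
  intro hnd
  have := hG s.toFinset ((List.toFinset_card_le s).trans hs) F.toFinset
    (fun e he => (hE e (List.mem_toFinset.1 he)).1)
    (fun e he => mem_sym2_iff.2 fun v hv =>
      List.mem_toFinset.2 ((hE e (List.mem_toFinset.1 he)).2 v hv))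
  rw [List.toFinset_card_of_nodup hnd] at this
  omega

lemma adj_iff_of_three_neighbors (hG : G.AtMostThreeEdgesOnFiveVertices) {p a b d : V}
    (hpa : G.Adj p a) (hpb : G.Adj p b) (hpd : G.Adj p d) (hab : a ≠ b) (had : a ≠ d)
    (hbd : b ≠ d) (t : V) : G.Adj p t ↔ t = a ∨ t = b ∨ t = d := by
  classical
  refine ⟨fun hpt => ?_, by rintro (rfl | rfl | rfl) <;> assumption⟩
  by_contra! h
  refine AtMostThreeEdgesOnFiveVertices.not_nodup hG (s := [p, a, b, d, t])
    (F := [s(p, a), s(p, b), s(p, d), s(p, t)]) le_rfl (by simp)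
    (by simp [hpa, hpb, hpd, hpt]) ?_
  simp [hpa.ne', hpb.ne', hpd.ne', hab, had, hbd, h.1.symm, h.2.1.symm, h.2.2.symm]

lemma leaf_adj_iff_of_three_neighbors (hG : G.AtMostThreeEdgesOnFiveVertices) {p a b d : V}
    (hpa : G.Adj p a) (hpb : G.Adj p b) (hpd : G.Adj p d) (hab : a ≠ b) (had : a ≠ d)
    (hbd : b ≠ d) (t : V) : G.Adj a t ↔ t = p := by
  classical
  refine ⟨fun hat => ?_, by rintro rfl; exact hpa.symm⟩
  by_contra! htp
  refine AtMostThreeEdgesOnFiveVertices.not_nodup hG (s := [p, a, b, d, t])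
    (F := [s(p, a), s(p, b), s(p, d), s(a, t)]) le_rfl (by simp)
    (by simp [hpa, hpb, hpd, hat]) ?_
  simp [hab, had, hbd, hpa.ne, hpa.ne', hpb.ne, hpd.ne, htp.symm]

lemma path_end_adj_iff (hG : G.AtMostThreeEdgesOnFiveVertices) (htri : G.CliqueFree 3)
    {w x y z : V} (hwx : G.Adj w x) (hxy : G.Adj x y) (hyz : G.Adj y z) (hwy : w ≠ y)
    (hxz : x ≠ z) (t : V) : G.Adj w t ↔ t = x := by
  classical
  refine ⟨fun hwt => ?_, by rintro rfl; exact hwx⟩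
  by_contra! htx
  obtain rfl | hty := eq_or_ne t y
  · exact G.isIndepSet_neighborSet_of_triangleFree htri x hwx.symm hxy hwy hwt
  refine AtMostThreeEdgesOnFiveVertices.not_nodup hG (s := [t, w, x, y, z])
    (F := [s(w, t), s(w, x), s(x, y), s(y, z)]) le_rfl (by simp)
    (by simp [hwx, hxy, hyz, hwt]) ?_
  simp [hwx.ne, hxy.ne, hyz.ne, hwy, hxz, htx, hty]

theorem ncard_edgeSet_eq_sum_components [Fintype V] [DecidableEq V] [DecidableRel G.Adj] :
    G.edgeSet.ncard = ∑ K : G.ConnectedComponent, (G.induce K.supp).edgeSet.ncard := by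
  have hunion : G.edgeSet = ⋃ K : G.ConnectedComponent,
      Sym2.map Subtype.val '' (G.induce K.supp).edgeSet := by
    ext e
    induction e using Sym2.ind with
    | _ u v =>
      simp only [mem_edgeSet, Set.mem_iUnion, Set.mem_image]
      refine ⟨fun huv => ⟨G.connectedComponentMk u, s(⟨u, rfl⟩, ⟨v, ?_⟩), huv, rfl⟩, ?_⟩
      · exact (G.connectedComponentMk u).mem_supp_of_adj_mem_supp rfl huv
      · rintro ⟨K, e, he, hmap⟩
        induction e using Sym2.ind with
        | _ a b =>
          rw [Sym2.map_mk, Sym2.eq_iff] at hmap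
          rcases hmap with ⟨rfl, rfl⟩ | ⟨rfl, rfl⟩
          exacts [he, he.symm]
  rw [hunion, Set.ncard_iUnion_of_finite (fun _ => Set.toFinite _), finsum_eq_sum_of_fintype]
  · congr! 1 with K
    exact Set.ncard_image_of_injective _ (Sym2.map.injective Subtype.val_injective)
  · intro K K' hKK'
    refine Set.disjoint_left.2 ?_
    rintro _ ⟨e, -, rfl⟩ ⟨e', -, he'⟩
    induction e using Sym2.ind with
    | _ a b =>
      have ha : (a : V) ∈ e'.map Subtype.val := by
        rw [he', Sym2.map_mk]
        exact Sym2.mem_mk_left _ _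
      obtain ⟨a', -, ha'⟩ := Sym2.mem_map.1 ha
      exact hKK' (ConnectedComponent.eq_of_common_vertex a.2 (ha' ▸ a'.2))

end SimpleGraph

lemma starK13_connected : starK13.Connected := by
  refine (connected_iff_exists_forall_reachable _).2 ⟨.inl 0, ?_⟩
  rintro (i | j)
  · rw [Subsingleton.elim i 0]
  · exact Adj.reachable (by simp [starK13])

lemma ncard_edgeSet_pathGraph_two : (pathGraph 2).edgeSet.ncard = 1 := by
  let _ : DecidableRel (pathGraph 2).Adj := fun u v => decidable_of_iff _ pathGraph_adj.symm
  rw [Set.ncard_eq_toFinset_card']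
  decide

lemma ncard_edgeSet_pathGraph_three : (pathGraph 3).edgeSet.ncard = 2 := by
  let _ : DecidableRel (pathGraph 3).Adj := fun u v => decidable_of_iff _ pathGraph_adj.symm
  rw [Set.ncard_eq_toFinset_card']
  decide

lemma ncard_edgeSet_pathGraph_four : (pathGraph 4).edgeSet.ncard = 3 := by
  let _ : DecidableRel (pathGraph 4).Adj := fun u v => decidable_of_iff _ pathGraph_adj.symm
  rw [Set.ncard_eq_toFinset_card']
  decide

lemma ncard_edgeSet_starK13 : starK13.edgeSet.ncard = 3 := by
  let _ : DecidableRel starK13.Adj := fun u v =>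
    decidable_of_iff (u.isLeft ∧ v.isRight ∨ u.isRight ∧ v.isLeft) Iff.rfl
  rw [Set.ncard_eq_toFinset_card']
  decide

section ComponentIso

variable {V W : Type*} {G : SimpleGraph V} {H : SimpleGraph W} {K : G.ConnectedComponent}

theorem componentIso_of_adj_iff (hH : H.Connected) {f : W → V} (hf : f.Injective)
    (hadj : ∀ a v, G.Adj (f a) v ↔ ∃ b, H.Adj a b ∧ f b = v) {a : W} (ha : f a ∈ K.supp) :
    ComponentIso G K H := by
  have hsupp : K.supp = Set.range f := by
    ext v
    refine ⟨fun hv => ?_, ?_⟩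
    · refine (K.reachable_of_mem_supp ha hv).mem_of_adj_closed ?_ ⟨a, rfl⟩
      rintro _ ⟨b, rfl⟩ y hy
      obtain ⟨b', -, rfl⟩ := (hadj b y).1 hy
      exact ⟨b', rfl⟩
    · rintro ⟨b, rfl⟩
      let φ : H →g G := ⟨f, fun h => (hadj _ _).2 ⟨_, h, rfl⟩⟩
      exact (ConnectedComponent.sound ((hH.preconnected a b).map φ).symm).trans ha
  let e : W → K.supp := fun b => ⟨f b, hsupp ▸ ⟨b, rfl⟩⟩
  have he : e.Bijective := by
    refine ⟨fun b b' h => hf (congrArg Subtype.val h), fun ⟨v, hv⟩ => ?_⟩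
    obtain ⟨b, rfl⟩ := hsupp ▸ hv
    exact ⟨b, rfl⟩
  refine ⟨(⟨Equiv.ofBijective e he, fun {b b'} => ?_⟩ : H ≃g G.induce K.supp).symm⟩
  simp only [Equiv.ofBijective_apply, comap_adj, Function.Embedding.coe_subtype, e, hadj,
    hf.eq_iff, exists_eq_right]

lemma componentIso_pathGraph_two_of_adj_iff {u v : V} (hu : ∀ t, G.Adj u t ↔ t = v)
    (hv : ∀ t, G.Adj v t ↔ t = u) (huK : u ∈ K.supp) : ComponentIso G K (pathGraph 2) := by
  have huv : u ≠ v := ((hu v).2 rfl).ne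
  refine componentIso_of_adj_iff (pathGraph_connected 1) (f := ![u, v]) ?_ ?_ (a := 0) huK
  · intro a b h
    fin_cases a <;> fin_cases b <;> simp_all [eq_comm]
  · intro a t
    fin_cases a <;> simp [Fin.exists_fin_succ, pathGraph_adj, hu, hv] <;> grind

lemma componentIso_pathGraph_three_of_adj_iff {x y z : V} (hxz : x ≠ z)
    (hx : ∀ t, G.Adj x t ↔ t = y) (hy : ∀ t, G.Adj y t ↔ t = x ∨ t = z)
    (hz : ∀ t, G.Adj z t ↔ t = y) (hxK : x ∈ K.supp) : ComponentIso G K (pathGraph 3) := by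
  have hxy : x ≠ y := ((hx y).2 rfl).ne
  have hyz : y ≠ z := ((hz y).2 rfl).ne'
  refine componentIso_of_adj_iff (pathGraph_connected 2) (f := ![x, y, z]) ?_ ?_ (a := 0) hxK
  · intro a b h
    fin_cases a <;> fin_cases b <;> simp_all [eq_comm]
  · intro a t
    fin_cases a <;> simp [Fin.exists_fin_succ, pathGraph_adj, hx, hy, hz] <;> grind

lemma componentIso_pathGraph_four_of_adj_iff {w x y z : V} (hwy : w ≠ y) (hwz : w ≠ z)
    (hxz : x ≠ z) (hw : ∀ t, G.Adj w t ↔ t = x) (hx : ∀ t, G.Adj x t ↔ t = w ∨ t = y)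
    (hy : ∀ t, G.Adj y t ↔ t = x ∨ t = z) (hz : ∀ t, G.Adj z t ↔ t = y) (hwK : w ∈ K.supp) :
    ComponentIso G K (pathGraph 4) := by
  have hwx : w ≠ x := ((hw x).2 rfl).ne
  have hxy : x ≠ y := ((hx y).2 (.inr rfl)).ne
  have hyz : y ≠ z := ((hz y).2 rfl).ne'
  refine componentIso_of_adj_iff (pathGraph_connected 3) (f := ![w, x, y, z]) ?_ ?_ (a := 0) hwK
  · intro a b h
    fin_cases a <;> fin_cases b <;> simp_all [eq_comm]
  · intro a t
    fin_cases a <;> simp [Fin.exists_fin_succ, pathGraph_adj, hw, hx, hy, hz] <;> grind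

lemma componentIso_starK13_of_adj_iff {p a b d : V} (hab : a ≠ b) (had : a ≠ d) (hbd : b ≠ d)
    (hp : ∀ t, G.Adj p t ↔ t = a ∨ t = b ∨ t = d) (ha : ∀ t, G.Adj a t ↔ t = p)
    (hb : ∀ t, G.Adj b t ↔ t = p) (hd : ∀ t, G.Adj d t ↔ t = p) (hpK : p ∈ K.supp) :
    ComponentIso G K starK13 := by
  have hpa : p ≠ a := ((ha p).2 rfl).ne'
  have hpb : p ≠ b := ((hb p).2 rfl).ne'
  have hpd : p ≠ d := ((hd p).2 rfl).ne'
  refine componentIso_of_adj_iff starK13_connected (f := Sum.elim (fun _ => p) ![a, b, d]) ?_ ?_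
    (a := .inl 0) hpK
  · rintro (i | i) (j | j) h <;> fin_cases i <;> fin_cases j <;> simp_all [eq_comm]
  · rintro (i | i) t <;> fin_cases i <;>
      simp [Sum.exists, Fin.exists_fin_succ, starK13, hp, ha, hb, hd] <;> grind

theorem componentIso_starK13_of_adj (hG : G.AtMostThreeEdgesOnFiveVertices) {p a b d : V}
    (hpa : G.Adj p a) (hpb : G.Adj p b) (hpd : G.Adj p d) (hab : a ≠ b) (had : a ≠ d)
    (hbd : b ≠ d) (hpK : p ∈ K.supp) : ComponentIso G K starK13 :=
  componentIso_starK13_of_adj_iff hab had hbd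
    (adj_iff_of_three_neighbors hG hpa hpb hpd hab had hbd)
    (leaf_adj_iff_of_three_neighbors hG hpa hpb hpd hab had hbd)
    (leaf_adj_iff_of_three_neighbors hG hpb hpa hpd hab.symm hbd had)
    (leaf_adj_iff_of_three_neighbors hG hpd hpa hpb had.symm hbd.symm hab) hpK

theorem componentIso_pathGraph_four_of_adj (hG : G.AtMostThreeEdgesOnFiveVertices)
    (htri : G.CliqueFree 3)
    (hdeg : ∀ v ∈ K.supp, ∀ a b d, G.Adj v a → G.Adj v b → G.Adj v d → a ≠ b → d = a ∨ d = b)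
    {w x y z : V} (hwx : G.Adj w x) (hxy : G.Adj x y) (hyz : G.Adj y z) (hwy : w ≠ y)
    (hxz : x ≠ z) (hwK : w ∈ K.supp) : ComponentIso G K (pathGraph 4) := by
  have hxK := K.mem_supp_of_adj_mem_supp hwK hwx
  have hyK := K.mem_supp_of_adj_mem_supp hxK hxy
  have hw := path_end_adj_iff hG htri hwx hxy hyz hwy hxz
  have hz := path_end_adj_iff hG htri hyz.symm hxy.symm hwx.symm hxz.symm hwy.symm
  have hwz : w ≠ z := by
    rintro rfl
    exact hxy.ne ((hw y).1 hyz.symm).symm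
  refine componentIso_pathGraph_four_of_adj_iff hwy hwz hxz hw (fun t => ⟨?_, ?_⟩)
    (fun t => ⟨?_, ?_⟩) hz hwK
  · exact fun hxt => hdeg x hxK w y t hwx.symm hxy hxt hwy
  · rintro (rfl | rfl)
    exacts [hwx.symm, hxy]
  · exact fun hyt => hdeg y hyK x z t hxy.symm hyz hyt hxz
  · rintro (rfl | rfl)
    exacts [hxy.symm, hyz]

theorem componentIso_pathGraph_three_of_adj
    (hdeg : ∀ v ∈ K.supp, ∀ a b d, G.Adj v a → G.Adj v b → G.Adj v d → a ≠ b → d = a ∨ d = b)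
    (hpath : ∀ w ∈ K.supp, ∀ x y z, G.Adj w x → G.Adj x y → G.Adj y z → w ≠ y → x = z)
    {x y z : V} (hxy : G.Adj x y) (hyz : G.Adj y z) (hxz : x ≠ z) (hxK : x ∈ K.supp) :
    ComponentIso G K (pathGraph 3) := by
  have hyK := K.mem_supp_of_adj_mem_supp hxK hxy
  have hzK := K.mem_supp_of_adj_mem_supp hyK hyz
  refine componentIso_pathGraph_three_of_adj_iff hxz (fun t => ⟨fun hxt => ?_, ?_⟩)
    (fun t => ⟨fun hyt => hdeg y hyK x z t hxy.symm hyz hyt hxz, ?_⟩)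
    (fun t => ⟨fun hzt => ?_, ?_⟩) hxK
  · by_contra hty
    exact hxz (hpath t (K.mem_supp_of_adj_mem_supp hxK hxt) x y z hxt.symm hxy hyz hty)
  · rintro rfl
    exact hxy
  · rintro (rfl | rfl)
    exacts [hxy.symm, hyz]
  · by_contra hty
    exact hxz (hpath t (K.mem_supp_of_adj_mem_supp hzK hzt) z y x hzt.symm hyz.symm hxy.symm
      hty).symm
  · rintro rfl
    exact hyz.symm

theorem componentIso_pathGraph_two_of_adj
    (hpath : ∀ x ∈ K.supp, ∀ y z, G.Adj x y → G.Adj y z → x = z) {u v : V} (huv : G.Adj u v)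
    (huK : u ∈ K.supp) : ComponentIso G K (pathGraph 2) := by
  refine componentIso_pathGraph_two_of_adj_iff (v := v) (fun t => ⟨fun hut => ?_, ?_⟩)
    (fun t => ⟨fun hvt => ?_, ?_⟩) huK
  · exact hpath t (K.mem_supp_of_adj_mem_supp huK hut) u v hut.symm huv
  · rintro rfl
    exact huv
  · exact (hpath u huK v t huv hvt).symm
  · rintro rfl
    exact huv.symm

theorem componentIso_of_compHasEdge (hG : G.AtMostThreeEdgesOnFiveVertices)
    (htri : G.CliqueFree 3) (hK : CompHasEdge G K) :
    ComponentIso G K (pathGraph 2) ∨ ComponentIso G K (pathGraph 3) ∨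
      ComponentIso G K (pathGraph 4) ∨ ComponentIso G K starK13 := by
  obtain ⟨u, v, huK, huv⟩ := hK
  by_cases hdeg : ∀ p ∈ K.supp, ∀ a b d, G.Adj p a → G.Adj p b → G.Adj p d → a ≠ b →
      d = a ∨ d = b
  swap
  · push Not at hdeg
    obtain ⟨p, hpK, a, b, d, hpa, hpb, hpd, hab, hda, hdb⟩ := hdeg
    exact .inr <| .inr <| .inr <|
      componentIso_starK13_of_adj hG hpa hpb hpd hab hda.symm hdb.symm hpK
  -- `w = z` is allowed, so a triangle lands in this case and is refuted by `path_end_adj_iff`.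
  by_cases hpath₃ : ∀ w ∈ K.supp, ∀ x y z, G.Adj w x → G.Adj x y → G.Adj y z → w ≠ y → x = z
  swap
  · push Not at hpath₃
    obtain ⟨w, hwK, x, y, z, hwx, hxy, hyz, hwy, hxz⟩ := hpath₃
    exact .inr <| .inr <| .inl <|
      componentIso_pathGraph_four_of_adj hG htri hdeg hwx hxy hyz hwy hxz hwK
  by_cases hpath₂ : ∀ x ∈ K.supp, ∀ y z, G.Adj x y → G.Adj y z → x = z
  · exact .inl <| componentIso_pathGraph_two_of_adj hpath₂ huv huK
  push Not at hpath₂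
  obtain ⟨x, hxK, y, z, hxy, hyz, hxz⟩ := hpath₂
  exact .inr <| .inl <| componentIso_pathGraph_three_of_adj hdeg hpath₃ hxy hyz hxz hxK

lemma ncard_edgeSet_of_componentIso (h : ComponentIso G K H) :
    (G.induce K.supp).edgeSet.ncard = H.edgeSet.ncard := by
  obtain ⟨f⟩ := h
  rw [← Nat.card_coe_set_eq, ← Nat.card_coe_set_eq, Nat.card_congr f.mapEdgeSet]

lemma compHasEdge_of_ncard_edgeSet_ne_zero (h : (G.induce K.supp).edgeSet.ncard ≠ 0) :
    CompHasEdge G K := by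
  obtain ⟨e, he⟩ := Set.nonempty_of_ncard_ne_zero h
  induction e using Sym2.ind with
  | _ a b => exact ⟨a, b, a.2, he⟩

lemma not_componentIso_starK13_of_pathGraph_four (h : ComponentIso G K (pathGraph 4)) :
    ¬ ComponentIso G K starK13 := by
  rintro ⟨g⟩
  obtain ⟨f⟩ := h
  let e := g.symm.trans f
  have hadj (j : Fin 3) : (pathGraph 4).Adj (e (.inl 0)) (e (.inr j)) :=
    e.map_rel_iff.2 (by simp [starK13])
  have hdeg : ∀ p q r s : Fin 4, (pathGraph 4).Adj p q → (pathGraph 4).Adj p r →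
      (pathGraph 4).Adj p s → q = r ∨ q = s ∨ r = s := by
    simp only [pathGraph_adj]
    omega
  rcases hdeg _ _ _ _ (hadj 0) (hadj 1) (hadj 2) with h | h | h <;>
    simpa using e.injective h

end ComponentIso

section Coloring

variable {n : ℕ} {α : Type*} {c : Sym2 (Fin n) → α}

lemma mem_edgeSet_colorClass {i : α} {e : Sym2 (Fin n)} :
    e ∈ (colorClass c i).edgeSet ↔ ¬ e.IsDiag ∧ c e = i := by
  induction e using Sym2.ind with
  | _ x y => exact Iff.rfl

lemma colorClass_cliqueFree_three (htri : ¬ HasMonoTriangle c) (i : α) :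
    (colorClass c i).CliqueFree 3 := by
  intro s hs
  obtain ⟨x, y, z, hxy, hxz, hyz, rfl⟩ := is3Clique_iff.1 hs
  exact htri ⟨x, y, z, hxy.1, hyz.1, hxz.1, hxy.2.trans hyz.2.symm, hyz.2.trans hxz.2.symm⟩

lemma IsPQColoring.add_card_le {p q : ℕ} (hc : IsPQColoring p q c) (hp : p ≤ n) {i : α}
    {s : Finset (Fin n)} (hs : s.card ≤ p) {F : Finset (Sym2 (Fin n))}
    (hF : ↑F ⊆ (colorClass c i).edgeSet) (hFs : F ⊆ s.sym2) : q + F.card ≤ p.choose 2 + 1 := by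
  classical
  obtain ⟨S, hsS, hS⟩ := exists_superset_card_eq hs (by simpa using hp)
  set E := S.offDiag.image (Function.uncurry Sym2.mk)
  have hcolors : {j | ∃ x ∈ S, ∃ y ∈ S, x ≠ y ∧ c s(x, y) = j} = ↑(E.image c) := by
    ext j
    simp [E, and_assoc]
  have hFE : F ⊆ E := by
    intro e he
    induction e using Sym2.ind with
    | _ x y =>
      have hxy := mem_sym2_iff.1 (hFs he)
      exact mem_image.2 ⟨(x, y), mem_offDiag.2 ⟨hsS (hxy x (Sym2.mem_mk_left _ _)),
        hsS (hxy y (Sym2.mem_mk_right _ _)), (mem_edgeSet_colorClass.1 (hF he)).1⟩, rfl⟩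
  have hsub : E.image c ⊆ insert i ((E \ F).image c) := by
    intro j hj
    obtain ⟨e, he, rfl⟩ := mem_image.1 hj
    by_cases heF : e ∈ F
    · exact mem_insert.2 (.inl (mem_edgeSet_colorClass.1 (hF heF)).2)
    · exact mem_insert_of_mem (mem_image_of_mem c (mem_sdiff.2 ⟨he, heF⟩))
  have hq := hc S hS
  rw [hcolors, Set.ncard_coe_finset] at hq
  have hE : E.card = p.choose 2 := by rw [Sym2.card_image_offDiag, hS]
  have := calc
    #(E.image c) ≤ #((E \ F).image c) + 1 := (card_le_card hsub).trans (card_insert_le _ _)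
    _ ≤ #(E \ F) + 1 := Nat.add_le_add_right card_image_le 1
    _ = p.choose 2 - #F + 1 := by rw [card_sdiff_of_subset hFE, hE]
  have := card_le_card hFE
  omega

lemma IsPQColoring.atMostThreeEdgesOnFiveVertices (hn : 5 ≤ n) (hc : IsPQColoring 5 8 c)
    (i : α) : (colorClass c i).AtMostThreeEdgesOnFiveVertices := fun _ hs _ hF hFs => by
  have := hc.add_card_le hn hs hF hFs
  simp [Nat.choose] at this
  omega

lemma sum_ncard_edgeSet_colorClass [Fintype α] (c : Sym2 (Fin n) → α) :
    ∑ i, (colorClass c i).edgeSet.ncard = n.choose 2 := by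
  classical
  have htop : #{e : Sym2 (Fin n) | ¬ e.IsDiag} = n.choose 2 := by
    rw [← Fintype.card_subtype, Sym2.card_subtype_not_diag, Fintype.card_fin]
  rw [← htop, card_eq_sum_card_fiberwise (f := c) (t := univ) (fun _ _ => mem_univ _)]
  refine sum_congr rfl fun i _ => ?_
  rw [← Set.ncard_coe_finset]
  congr 1
  ext e
  simp [mem_edgeSet_colorClass]

lemma ncard_setB1_add_ncard_setB2 [Finite α] (c : Sym2 (Fin n) → α) :
    (setB1 c).ncard + (setB2 c).ncard = (setB c).ncard := by
  rw [add_comm]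
  exact Set.ncard_sdiff_add_ncard_of_subset (fun _ hX => hX.1)

theorem ncard_edgeSet_component_eq (hn : 5 ≤ n) (hc : IsPQColoring 5 8 c)
    (htri : ¬ HasMonoTriangle c) (X : Σ i : α, (colorClass c i).ConnectedComponent)
    [Decidable (X ∈ setA c)] [Decidable (X ∈ setB c)] [Decidable (X ∈ setC c)]
    [Decidable (X ∈ setD c)] :
    ((colorClass c X.1).induce X.2.supp).edgeSet.ncard =
      (if X ∈ setA c then 1 else 0) + 2 * (if X ∈ setB c then 1 else 0) +
        3 * (if X ∈ setC c then 1 else 0) + 3 * (if X ∈ setD c then 1 else 0) := by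
  have hA (h : X ∈ setA c) := (ncard_edgeSet_of_componentIso h).trans ncard_edgeSet_pathGraph_two
  have hB (h : X ∈ setB c) :=
    (ncard_edgeSet_of_componentIso h).trans ncard_edgeSet_pathGraph_three
  have hC (h : X ∈ setC c) :=
    (ncard_edgeSet_of_componentIso h).trans ncard_edgeSet_pathGraph_four
  have hD (h : X ∈ setD c) := (ncard_edgeSet_of_componentIso h).trans ncard_edgeSet_starK13
  have hCD (h : X ∈ setC c) : X ∉ setD c := not_componentIso_starK13_of_pathGraph_four h
  have hcover (h : ((colorClass c X.1).induce X.2.supp).edgeSet.ncard ≠ 0) :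
      X ∈ setA c ∨ X ∈ setB c ∨ X ∈ setC c ∨ X ∈ setD c :=
    componentIso_of_compHasEdge (hc.atMostThreeEdgesOnFiveVertices hn X.1)
      (colorClass_cliqueFree_three htri X.1) (compHasEdge_of_ncard_edgeSet_ne_zero h)
  split_ifs <;> grind

end Coloring

/-- For a `(5,8)`-coloring of `K_n` (`n ≥ 5`) with `m` colors and no
monochromatic triangle, `binom(n,2) = |A| + 2|B| + 3|C| + 3|D|`, where `B = B₁ ∪ B₂`. -/
theorem edge_count_identity {n m : ℕ} (hn : 5 ≤ n)
    (c : Sym2 (Fin n) → Fin m) (hc : IsPQColoring 5 8 c)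
    (htri : ¬ HasMonoTriangle c) :
    n.choose 2 = (setA c).ncard + 2 * ((setB1 c).ncard + (setB2 c).ncard) +
      3 * (setC c).ncard + 3 * (setD c).ncard := by
  classical
  have hcard (s : Set (Σ i : Fin m, (colorClass c i).ConnectedComponent)) :
      ∑ X, (if X ∈ s then 1 else 0) = s.ncard := by
    rw [sum_boole, Set.filter_mem_univ_eq_toFinset, Set.ncard_eq_toFinset_card', Nat.cast_id]
  rw [ncard_setB1_add_ncard_setB2, ← sum_ncard_edgeSet_colorClass c]
  calc ∑ i, (colorClass c i).edgeSet.ncard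
      = ∑ i, ∑ K : (colorClass c i).ConnectedComponent,
          ((colorClass c i).induce K.supp).edgeSet.ncard :=
        sum_congr rfl fun i _ => ncard_edgeSet_eq_sum_components
    _ = ∑ X : Σ i : Fin m, (colorClass c i).ConnectedComponent,
          ((colorClass c X.1).induce X.2.supp).edgeSet.ncard := by
        rw [Fintype.sum_sigma]
    _ = _ := by
      simp only [ncard_edgeSet_component_eq hn hc htri, sum_add_distrib, ← mul_sum, hcard]
end

section
/- Let n ≥ 5 and let c be a (5,8)-coloring of K_n with m colors and with no monochromatic triangle. Then m·n − 2·binom(n,2) ≥ |D| − |B_1|. -/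
open SimpleGraph

/-!
Write `d(v, i)` for the degree of the vertex `v` in the colour class of `i`. Five vertices
must span eight colours, so `d ≤ 3`, and summing `1 - d` over all pairs `(v, i)` gives
`m·n - 2·binom(n,2) = #{d = 0} - #{d = 2} - 2·#{d = 3}`.

Two `i`-neighbours `a, b` of `v` form a cherry, whose joining colour `c(ab)` is charged to the
pair `(v, c(ab))`. Charges at the same vertex are distinct, and a charged colour is missing at
`v`: an edge `vw` of colour `c(ab)` would make `v, a, b, w` and a suitable fifth vertex span at
most seven colours. The fifth vertex comes from a third `i`-neighbour of `v`, a further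
`i`-neighbour of `a` or `b`, or another `P₃`-component meeting `{a, v, b}` twice, so only the
centres of components in `B₁` escape. Hence `#{d = 0} ≥ #{d = 2} + 3·#{d = 3} - #{B₁-centres}`,
and the theorem follows from `|D| ≤ #{d = 3}` (centres of stars) and `#{B₁-centres} ≤ |B₁|`.
-/

open Finset

namespace SimpleGraph

variable {V : Type*} {G : SimpleGraph V}

theorem supp_connectedComponentMk_subset {S : Set V} (hS : ∀ a b, a ∈ S → G.Adj a b → b ∈ S)
    {v : V} (hv : v ∈ S) : (G.connectedComponentMk v).supp ⊆ S := by
  have walk_mem : ∀ {a b : V}, G.Walk a b → a ∈ S → b ∈ S := by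
    intro a b p
    induction p with
    | nil => exact id
    | cons h _ ih => exact fun ha => ih (hS _ _ ha h)
  intro u hu
  obtain ⟨p⟩ := (ConnectedComponent.eq.mp hu).symm
  exact walk_mem p hv

theorem exists_eq_of_induce_iso_pathGraph_three {S : Set V} (φ : G.induce S ≃g pathGraph 3) :
    ∃ y₀ y₁ y₂ : V, y₀ ≠ y₁ ∧ y₀ ≠ y₂ ∧ y₁ ≠ y₂ ∧ S = {y₀, y₁, y₂} ∧
      G.Adj y₀ y₁ ∧ G.Adj y₁ y₂ := by
  have hne : ∀ {k l : Fin 3}, k ≠ l → (φ.symm k : V) ≠ φ.symm l := fun hkl h =>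
    hkl (φ.symm.injective (Subtype.ext h))
  refine ⟨φ.symm 0, φ.symm 1, φ.symm 2, hne (by decide), hne (by decide), hne (by decide),
    Set.Subset.antisymm (fun u hu => ?_) ?_, φ.symm.map_adj_iff.mpr (by simp [pathGraph_adj]),
    φ.symm.map_adj_iff.mpr (by simp [pathGraph_adj])⟩
  · have hu' : u = φ.symm (φ ⟨u, hu⟩) := by simp
    rw [hu']
    generalize φ ⟨u, hu⟩ = k
    fin_cases k <;> simp
  · rintro _ (rfl | rfl | rfl) <;> exact Subtype.coe_prop _

variable [Fintype V] [DecidableRel G.Adj]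

theorem exists_three_le_degree_of_induce_iso_starK13 {S : Set V} (φ : G.induce S ≃g starK13) :
    ∃ u ∈ S, 3 ≤ G.degree u := by
  have hadj : ∀ k, G.Adj (φ.symm (.inl 0)) (φ.symm (.inr k)) := fun k =>
    φ.symm.map_adj_iff.mpr (by simp [starK13])
  have hne : ∀ {k l : Fin 3}, k ≠ l → (φ.symm (.inr k) : V) ≠ φ.symm (.inr l) := fun hkl h =>
    hkl (Sum.inr_injective (φ.symm.injective (Subtype.ext h)))
  refine ⟨φ.symm (.inl 0), Subtype.coe_prop _, ?_⟩
  rw [← card_neighborFinset_eq_degree]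
  exact two_lt_card_iff.mpr ⟨_, _, _, (mem_neighborFinset _ _ _).mpr (hadj 0),
    (mem_neighborFinset _ _ _).mpr (hadj 1), (mem_neighborFinset _ _ _).mpr (hadj 2),
    hne (by decide), hne (by decide), hne (by decide)⟩

theorem neighborFinset_eq_of_degree_eq_one {v s : V} (hd : G.degree v = 1) (hs : G.Adj v s) :
    G.neighborFinset v = {s} :=
  (eq_of_subset_of_card_le (by simpa using hs)
    (by rw [card_neighborFinset_eq_degree, hd, card_singleton])).symm

variable [DecidableEq V]

theorem neighborFinset_eq_of_degree_eq_two {v s t : V} (hd : G.degree v = 2) (hs : G.Adj v s)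
    (ht : G.Adj v t) (hst : s ≠ t) : G.neighborFinset v = {s, t} :=
  (eq_of_subset_of_card_le (by simp [insert_subset_iff, hs, ht])
    (by rw [card_neighborFinset_eq_degree, hd, card_pair hst])).symm

section CherryComponent

variable {v s t : V} (hs : G.Adj v s) (ht : G.Adj v t) (hst : s ≠ t) (hv : G.degree v = 2)
  (hds : G.degree s = 1) (hdt : G.degree t = 1)
include hs ht hst hv hds hdt

theorem supp_connectedComponentMk_eq_of_degree :
    (G.connectedComponentMk v).supp = {s, v, t} := by
  refine Set.Subset.antisymm (supp_connectedComponentMk_subset ?_ (by simp)) ?_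
  · rintro a b (rfl | rfl | rfl) hab <;> rw [← mem_neighborFinset] at hab
    · rw [neighborFinset_eq_of_degree_eq_one hds hs.symm] at hab; simp_all
    · rw [neighborFinset_eq_of_degree_eq_two hv hs ht hst] at hab; aesop
    · rw [neighborFinset_eq_of_degree_eq_one hdt ht.symm] at hab; simp_all
  · rintro _ (rfl | rfl | rfl)
    exacts [ConnectedComponent.connectedComponentMk_eq_of_adj hs.symm, rfl,
      ConnectedComponent.connectedComponentMk_eq_of_adj ht.symm]

theorem nonempty_induce_supp_iso_pathGraph_three :
    Nonempty (G.induce (G.connectedComponentMk v).supp ≃g pathGraph 3) := by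
  have hsupp := supp_connectedComponentMk_eq_of_degree hs ht hst hv hds hdt
  have hnst : ¬ G.Adj s t := fun h => by
    have := neighborFinset_eq_of_degree_eq_one hds hs.symm ▸ (mem_neighborFinset _ _ _).mpr h
    exact ht.ne (mem_singleton.mp this).symm
  have hnts : ¬ G.Adj t s := fun h => hnst h.symm
  let f : Fin 3 → (G.connectedComponentMk v).supp :=
    ![⟨s, by simp [hsupp]⟩, ⟨v, by simp [hsupp]⟩, ⟨t, by simp [hsupp]⟩]
  have hf : Function.Bijective f := by
    refine ⟨fun k l hkl => ?_, fun ⟨u, hu⟩ => ?_⟩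
    · fin_cases k <;> fin_cases l <;> simp_all [f, Subtype.ext_iff, hs.ne, ht.ne, hst.symm]
    · rw [hsupp] at hu
      rcases hu with rfl | rfl | rfl
      exacts [⟨0, rfl⟩, ⟨1, rfl⟩, ⟨2, rfl⟩]
  refine ⟨Iso.symm ⟨Equiv.ofBijective f hf, fun {k l} => ?_⟩⟩
  fin_cases k <;> fin_cases l <;>
    simp [f, pathGraph_adj, hs, ht, hs.symm, ht.symm, hnst, hnts]

end CherryComponent

end SimpleGraph

theorem Fin.exists_notMem_of_card_lt {n : ℕ} {s : Finset (Fin n)} (h : #s < n) : ∃ x, x ∉ s := by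
  obtain ⟨x, -, hx⟩ := exists_mem_notMem_of_card_lt_card (h.trans_eq (card_fin n).symm)
  exact ⟨x, hx⟩

section Coloring

variable {n : ℕ} {α : Type*} {c : Sym2 (Fin n) → α} {i : α}

instance colorClass.decidableAdj [DecidableEq α] (c : Sym2 (Fin n) → α) (i : α) :
    DecidableRel (colorClass c i).Adj :=
  fun x y => inferInstanceAs (Decidable (x ≠ y ∧ c s(x, y) = i))

theorem colorClass_adj {x y : Fin n} : (colorClass c i).Adj x y ↔ x ≠ y ∧ c s(x, y) = i :=
  Iff.rfl

theorem sum_degree_colorClass [Fintype α] [DecidableEq α] (v : Fin n) :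
    ∑ i, (colorClass c i).degree v = n - 1 := by
  have h : ∀ i, (colorClass c i).degree v = #{y ∈ univ.erase v | c s(v, y) = i} := by
    intro i
    rw [← card_neighborFinset_eq_degree]
    congr 1
    ext y
    simp [colorClass_adj, ne_comm]
  simp_rw [h]
  rw [← card_eq_sum_card_fiberwise fun y _ => mem_univ (c s(v, y))]
  simp

theorem color_ne_of_adj_of_adj (htri : ¬ HasMonoTriangle c) {v a b : Fin n}
    (ha : (colorClass c i).Adj v a) (hb : (colorClass c i).Adj v b) (hab : a ≠ b) :
    c s(a, b) ≠ i := fun h =>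
  htri ⟨a, v, b, ha.1.symm, hb.1, hab, by rw [Sym2.eq_swap, ha.2, hb.2], by rw [hb.2, h]⟩

theorem sym2_eq_of_adj_of_ne {v s t : Fin n} (hvs : (colorClass c i).Adj v s)
    (hvt : (colorClass c i).Adj v t) {j : α} (hij : i ≠ j) {a b : Fin n}
    (ha : a ∈ ({s, v, t} : Set (Fin n))) (hb : b ∈ ({s, v, t} : Set (Fin n)))
    (hab : (colorClass c j).Adj a b) : s(a, b) = s(s, t) := by
  rcases ha with rfl | rfl | rfl <;> rcases hb with rfl | rfl | rfl <;>
    first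
      | exact absurd rfl hab.ne
      | rfl
      | exact Sym2.eq_swap
      | exact absurd (hvs.2.symm.trans hab.2) hij
      | exact absurd (hvs.2.symm.trans hab.symm.2) hij
      | exact absurd (hvt.2.symm.trans hab.2) hij
      | exact absurd (hvt.2.symm.trans hab.symm.2) hij

namespace IsPQColoring

theorem eight_le_length (hc : IsPQColoring 5 8 c) (v₀ v₁ v₂ v₃ v₄ : Fin n) (l : List α)
    (hv : [v₀, v₁, v₂, v₃, v₄].Nodup)
    (h₀₁ : c s(v₀, v₁) ∈ l) (h₀₂ : c s(v₀, v₂) ∈ l) (h₀₃ : c s(v₀, v₃) ∈ l)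
    (h₀₄ : c s(v₀, v₄) ∈ l) (h₁₂ : c s(v₁, v₂) ∈ l) (h₁₃ : c s(v₁, v₃) ∈ l)
    (h₁₄ : c s(v₁, v₄) ∈ l) (h₂₃ : c s(v₂, v₃) ∈ l) (h₂₄ : c s(v₂, v₄) ∈ l)
    (h₃₄ : c s(v₃, v₄) ∈ l) : 8 ≤ l.length := by
  classical
  refine (hc _ (List.toFinset_card_of_nodup hv)).trans ?_
  calc {j | ∃ x ∈ [v₀, v₁, v₂, v₃, v₄].toFinset, ∃ y ∈ [v₀, v₁, v₂, v₃, v₄].toFinset,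
          x ≠ y ∧ c s(x, y) = j}.ncard
      ≤ (l.toFinset : Set α).ncard := by
        refine Set.ncard_le_ncard ?_ (Set.toFinite _)
        rintro _ ⟨x, hx, y, hy, hxy, rfl⟩
        simp only [List.mem_toFinset, List.mem_cons, List.not_mem_nil, or_false] at hx hy
        rw [mem_coe, List.mem_toFinset]
        rcases hx with rfl | rfl | rfl | rfl | rfl <;>
          rcases hy with rfl | rfl | rfl | rfl | rfl <;>
          first | exact absurd rfl hxy | assumption | (rw [Sym2.eq_swap]; assumption)
    _ ≤ l.length := by rw [Set.ncard_coe_finset]; exact List.toFinset_card_le l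

theorem four_le_length (hc : IsPQColoring 5 8 c) (hn : 5 ≤ n) (v₀ v₁ v₂ v₃ : Fin n)
    (l : List α) (hv : [v₀, v₁, v₂, v₃].Nodup)
    (h₀₁ : c s(v₀, v₁) ∈ l) (h₀₂ : c s(v₀, v₂) ∈ l) (h₀₃ : c s(v₀, v₃) ∈ l)
    (h₁₂ : c s(v₁, v₂) ∈ l) (h₁₃ : c s(v₁, v₃) ∈ l) (h₂₃ : c s(v₂, v₃) ∈ l) :
    4 ≤ l.length := by
  classical
  obtain ⟨x, hx⟩ := Fin.exists_notMem_of_card_lt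
    ((List.toFinset_card_le [v₀, v₁, v₂, v₃]).trans_lt (by simp; omega))
  rw [List.mem_toFinset] at hx
  have := hc.eight_le_length v₀ v₁ v₂ v₃ x
    (l ++ [c s(v₀, x), c s(v₁, x), c s(v₂, x), c s(v₃, x)]) (List.Nodup.concat hx hv)
    (by simp [h₀₁]) (by simp [h₀₂]) (by simp [h₀₃]) (by simp) (by simp [h₁₂]) (by simp [h₁₃])
    (by simp) (by simp [h₂₃]) (by simp) (by simp)
  simpa using this

theorem color_notMem_of_length_le_four (hc : IsPQColoring 5 8 c) (v₀ v₁ v₂ v₃ w : Fin n)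
    (l : List α) (hv : [v₀, v₁, v₂, v₃, w].Nodup) (hl : l.length ≤ 4)
    (h₀₁ : c s(v₀, v₁) ∈ l) (h₀₂ : c s(v₀, v₂) ∈ l) (h₀₃ : c s(v₀, v₃) ∈ l)
    (h₁₂ : c s(v₁, v₂) ∈ l) (h₁₃ : c s(v₁, v₃) ∈ l) (h₂₃ : c s(v₂, v₃) ∈ l) :
    c s(v₀, w) ∉ l := by
  intro h₀
  have := hc.eight_le_length _ _ _ _ _ (l ++ [c s(v₁, w), c s(v₂, w), c s(v₃, w)]) hv
    (by simp [h₀₁]) (by simp [h₀₂]) (by simp [h₀₃]) (by simp [h₀]) (by simp [h₁₂])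
    (by simp [h₁₃]) (by simp) (by simp [h₂₃]) (by simp) (by simp)
  simp at this
  omega

theorem degree_colorClass_le_three [DecidableEq α] (hc : IsPQColoring 5 8 c) (v : Fin n) :
    (colorClass c i).degree v ≤ 3 := by
  by_contra! h
  obtain ⟨a, b, d, e, ha, hb, hd, he, hab, had, hae, hbd, hbe, hde⟩ :=
    three_lt_card_iff.mp (h.trans_eq (card_neighborFinset_eq_degree _ v).symm)
  rw [mem_neighborFinset] at ha hb hd he
  have := hc.eight_le_length v a b d e [i, c s(a, b), c s(a, d), c s(a, e), c s(b, d),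
    c s(b, e), c s(d, e)] (by simp [*, ha.1, hb.1, hd.1, he.1])
    (by simp [ha.2]) (by simp [hb.2]) (by simp [hd.2]) (by simp [he.2])
    (by simp) (by simp) (by simp) (by simp) (by simp) (by simp)
  simp at this

theorem color_ne_of_disjoint_cherries (hc : IsPQColoring 5 8 c) {i' : α} {v s t s' t' : Fin n}
    (hvs : (colorClass c i).Adj v s) (hvt : (colorClass c i).Adj v t)
    (hvs' : (colorClass c i').Adj v s') (hvt' : (colorClass c i').Adj v t')
    (h : [s, t, s', t'].Nodup) : c s(s, t) ≠ c s(s', t') := by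
  intro heq
  have := hc.eight_le_length v s t s' t'
    [i, i', c s(s, t), c s(s, s'), c s(s, t'), c s(t, s'), c s(t, t')]
    (List.nodup_cons.mpr ⟨by simp [hvs.1, hvt.1, hvs'.1, hvt'.1], h⟩)
    (by simp [hvs.2]) (by simp [hvt.2]) (by simp [hvs'.2]) (by simp [hvt'.2])
    (by simp) (by simp) (by simp) (by simp) (by simp) (by simp [heq])
  simp at this

theorem color_ne_of_cherries_of_ne (hc : IsPQColoring 5 8 c) {i' : α} (hii' : i ≠ i')
    {v s t s' t' : Fin n} (hvs : (colorClass c i).Adj v s) (hvt : (colorClass c i).Adj v t)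
    (hvs' : (colorClass c i').Adj v s') (hvt' : (colorClass c i').Adj v t')
    (hst : s ≠ t) (hs't' : s' ≠ t') : c s(s, t) ≠ c s(s', t') := by
  have hne : ∀ {a b}, (colorClass c i).Adj v a → (colorClass c i').Adj v b → a ≠ b := by
    rintro a b ha hb rfl
    exact hii' (ha.2.symm.trans hb.2)
  exact hc.color_ne_of_disjoint_cherries hvs hvt hvs' hvt'
    (by simp [hst, hs't', hne hvs hvs', hne hvs hvt', hne hvt hvs', hne hvt hvt'])

theorem color_ne_of_three_neighbors (hc : IsPQColoring 5 8 c) (hn : 5 ≤ n) {v a b d : Fin n}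
    (hva : (colorClass c i).Adj v a) (hvb : (colorClass c i).Adj v b)
    (hvd : (colorClass c i).Adj v d) (hab : a ≠ b) (had : a ≠ d) (hbd : b ≠ d) :
    c s(a, b) ≠ c s(a, d) := by
  intro heq
  have := hc.four_le_length hn v a b d [i, c s(a, b), c s(b, d)]
    (by simp [*, hva.1, hvb.1, hvd.1]) (by simp [hva.2]) (by simp [hvb.2]) (by simp [hvd.2])
    (by simp) (by simp [heq]) (by simp)
  simp at this

theorem isIsolated_of_cherry_of_four (hc : IsPQColoring 5 8 c) (htri : ¬ HasMonoTriangle c)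
    {v s t x : Fin n} (hvs : (colorClass c i).Adj v s) (hvt : (colorClass c i).Adj v t)
    (hst : s ≠ t) (hx : [v, s, t, x].Nodup) (l : List α) (hl : l.length ≤ 4) (hi : i ∈ l)
    (hμ : c s(s, t) ∈ l) (hvx : c s(v, x) ∈ l) (hsx : c s(s, x) ∈ l) (htx : c s(t, x) ∈ l)
    (hvx_ne : c s(v, x) ≠ c s(s, t)) : (colorClass c (c s(s, t))).IsIsolated v := by
  rintro w ⟨hvw, hw⟩
  rcases eq_or_ne w s with rfl | hws
  · exact color_ne_of_adj_of_adj htri hvs hvt hst (hw.symm.trans hvs.2)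
  rcases eq_or_ne w t with rfl | hwt
  · exact color_ne_of_adj_of_adj htri hvs hvt hst (hw.symm.trans hvt.2)
  rcases eq_or_ne w x with rfl | hwx
  · exact hvx_ne hw
  refine hc.color_notMem_of_length_le_four v s t x w l ?_ hl (hvs.2 ▸ hi) (hvt.2 ▸ hi) hvx
    hμ hsx htx (hw ▸ hμ)
  simp only [List.nodup_cons, List.mem_cons, List.not_mem_nil, or_false] at hx ⊢
  tauto

theorem isIsolated_of_three_neighbors (hc : IsPQColoring 5 8 c) (htri : ¬ HasMonoTriangle c)
    {v a b d : Fin n} (hva : (colorClass c i).Adj v a) (hvb : (colorClass c i).Adj v b)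
    (hvd : (colorClass c i).Adj v d) (hab : a ≠ b) (had : a ≠ d) (hbd : b ≠ d) :
    (colorClass c (c s(a, b))).IsIsolated v :=
  hc.isIsolated_of_cherry_of_four htri hva hvb hab (by simp [*, hva.1, hvb.1, hvd.1])
    [i, c s(a, b), c s(a, d), c s(b, d)] (by simp) (by simp) (by simp) (by simp [hvd.2])
    (by simp) (by simp) (hvd.2.trans_ne (color_ne_of_adj_of_adj htri hva hvb hab).symm)

theorem isIsolated_of_cherry_of_adj (hc : IsPQColoring 5 8 c) (hn : 5 ≤ n)
    (htri : ¬ HasMonoTriangle c) {v s t u : Fin n} (hvs : (colorClass c i).Adj v s)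
    (hvt : (colorClass c i).Adj v t) (hst : s ≠ t) (htu : (colorClass c i).Adj t u)
    (huv : u ≠ v) : (colorClass c (c s(s, t))).IsIsolated v := by
  have hus : u ≠ s := by
    rintro rfl
    exact color_ne_of_adj_of_adj htri hvs hvt hst (by rw [Sym2.eq_swap, htu.2])
  have hx : [v, s, t, u].Nodup := by simp [hvs.1, hvt.1, hst, huv.symm, hus.symm, htu.1]
  refine hc.isIsolated_of_cherry_of_four htri hvs hvt hst hx
    [i, c s(s, t), c s(v, u), c s(s, u)] (by simp) (by simp) (by simp) (by simp) (by simp)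
    (by simp [htu.2]) fun hvu => ?_
  have := hc.four_le_length hn v s t u [i, c s(s, t), c s(s, u)] hx
    (by simp [hvs.2]) (by simp [hvt.2]) (by simp [hvu]) (by simp) (by simp) (by simp [htu.2])
  simp at this

section CherryWithFourthVertex

variable {v s t : Fin n} (hc : IsPQColoring 5 8 c) (hn : 5 ≤ n) (htri : ¬ HasMonoTriangle c)
  (hvs : (colorClass c i).Adj v s) (hvt : (colorClass c i).Adj v t) (hst : s ≠ t)
include hc hn htri hvs hvt hst

theorem isIsolated_of_cherry_of_color_eq_left {x : Fin n} (hx : [v, s, t, x].Nodup)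
    (hsx : c s(s, x) = c s(s, t)) : (colorClass c (c s(s, t))).IsIsolated v :=
  hc.isIsolated_of_cherry_of_four htri hvs hvt hst hx [i, c s(s, t), c s(v, x), c s(t, x)]
    (by simp) (by simp) (by simp) (by simp) (by simp [hsx]) (by simp) fun hvx => by
      have := hc.four_le_length hn v s t x [i, c s(s, t), c s(t, x)] hx (by simp [hvs.2])
        (by simp [hvt.2]) (by simp [hvx]) (by simp) (by simp [hsx]) (by simp)
      simp at this

theorem isIsolated_of_cherry_of_ends_color_eq {x : Fin n} (hx : [v, s, t, x].Nodup)
    (hsx : c s(s, x) = c s(t, x)) : (colorClass c (c s(s, t))).IsIsolated v :=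
  hc.isIsolated_of_cherry_of_four htri hvs hvt hst hx [i, c s(s, t), c s(s, x), c s(v, x)]
    (by simp) (by simp) (by simp) (by simp) (by simp) (by simp [← hsx]) fun hvx => by
      have := hc.four_le_length hn v s t x [i, c s(s, t), c s(s, x)] hx (by simp [hvs.2])
        (by simp [hvt.2]) (by simp [hvx]) (by simp) (by simp) (by simp [← hsx])
      simp at this

theorem isIsolated_of_cherry_of_color_eq_center {x : Fin n} (hx : [v, s, t, x].Nodup)
    (hvx : c s(v, x) = c s(s, x)) : (colorClass c (c s(s, t))).IsIsolated v :=
  hc.isIsolated_of_cherry_of_four htri hvs hvt hst hx [i, c s(s, t), c s(v, x), c s(t, x)]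
    (by simp) (by simp) (by simp) (by simp) (by simp [← hvx]) (by simp) fun hvx' => by
      have := hc.four_le_length hn v s t x [i, c s(s, t), c s(t, x)] hx (by simp [hvs.2])
        (by simp [hvt.2]) (by simp [hvx']) (by simp) (by simp [← hvx, hvx']) (by simp)
      simp at this

theorem isIsolated_of_path_edge_mem {j : α} (hij : i ≠ j) {a b d : Fin n}
    (ha : a ∈ ({s, v, t} : Set (Fin n))) (hb : b ∈ ({s, v, t} : Set (Fin n)))
    (hab : (colorClass c j).Adj a b) (hbd : (colorClass c j).Adj b d) (had : a ≠ d) :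
    (colorClass c (c s(s, t))).IsIsolated v := by
  have hab' := sym2_eq_of_adj_of_ne hvs hvt hij ha hb hab
  have hd : d ∉ ({s, v, t} : Set (Fin n)) := fun hd => by
    rcases Sym2.eq_iff.mp ((sym2_eq_of_adj_of_ne hvs hvt hij hb hd hbd).trans hab'.symm) with
      ⟨h, -⟩ | ⟨-, h⟩
    exacts [hab.ne h.symm, had h.symm]
  simp only [Set.mem_insert_iff, Set.mem_singleton_iff, not_or] at hd
  have hμ : c s(s, t) = j := hab' ▸ hab.2
  rcases Sym2.eq_iff.mp hab' with ⟨rfl, rfl⟩ | ⟨rfl, rfl⟩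
  · rw [Sym2.eq_swap]
    exact hc.isIsolated_of_cherry_of_color_eq_left hn htri hvt hvs hst.symm (x := d)
      (by simp [hvs.ne, hvt.ne, hst.symm, Ne.symm hd.1, Ne.symm hd.2.1, Ne.symm hd.2.2])
      (by rw [hbd.2, Sym2.eq_swap, hμ])
  · exact hc.isIsolated_of_cherry_of_color_eq_left hn htri hvs hvt hst (x := d)
      (by simp [hvs.ne, hvt.ne, hst, Ne.symm hd.1, Ne.symm hd.2.1, Ne.symm hd.2.2])
      (by rw [hbd.2, hμ])

theorem isIsolated_of_path_ends_mem {j : α} (hij : i ≠ j) {a b d : Fin n}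
    (ha : a ∈ ({s, v, t} : Set (Fin n))) (hd : d ∈ ({s, v, t} : Set (Fin n)))
    (hab : (colorClass c j).Adj a b) (hbd : (colorClass c j).Adj b d) (had : a ≠ d) :
    (colorClass c (c s(s, t))).IsIsolated v := by
  by_cases hb : b ∈ ({s, v, t} : Set (Fin n))
  · exact hc.isIsolated_of_path_edge_mem hn htri hvs hvt hst hij ha hb hab hbd had
  simp only [Set.mem_insert_iff, Set.mem_singleton_iff, not_or] at hb
  have hx : [v, s, t, b].Nodup := by
    simp [hvs.ne, hvt.ne, hst, Ne.symm hb.1, Ne.symm hb.2.1, Ne.symm hb.2.2]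
  have hx' : [v, t, s, b].Nodup := by
    simp [hvs.ne, hvt.ne, hst.symm, Ne.symm hb.1, Ne.symm hb.2.1, Ne.symm hb.2.2]
  have hcol : c s(a, b) = c s(d, b) := hab.2.trans hbd.symm.2.symm
  have center_t : c s(v, b) = c s(t, b) → (colorClass c (c s(s, t))).IsIsolated v := fun h => by
    rw [Sym2.eq_swap]
    exact hc.isIsolated_of_cherry_of_color_eq_center hn htri hvt hvs hst.symm hx' h
  rcases ha with rfl | rfl | rfl <;> rcases hd with rfl | rfl | rfl
  · exact absurd rfl had
  · exact hc.isIsolated_of_cherry_of_color_eq_center hn htri hvs hvt hst hx hcol.symm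
  · exact hc.isIsolated_of_cherry_of_ends_color_eq hn htri hvs hvt hst hx hcol
  · exact hc.isIsolated_of_cherry_of_color_eq_center hn htri hvs hvt hst hx hcol
  · exact absurd rfl had
  · exact center_t hcol
  · exact hc.isIsolated_of_cherry_of_ends_color_eq hn htri hvs hvt hst hx hcol.symm
  · exact center_t hcol.symm
  · exact absurd rfl had

end CherryWithFourthVertex

end IsPQColoring

def monoComponent (c : Sym2 (Fin n) → α) (v : Fin n) (i : α) :
    Σ j : α, (colorClass c j).ConnectedComponent :=
  ⟨i, (colorClass c i).connectedComponentMk v⟩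

theorem IsPQColoring.isIsolated_of_notMem_setB1 {v s t : Fin n} (hc : IsPQColoring 5 8 c)
    (hn : 5 ≤ n) (htri : ¬ HasMonoTriangle c) (hvs : (colorClass c i).Adj v s)
    (hvt : (colorClass c i).Adj v t) (hst : s ≠ t)
    (hsupp : ((colorClass c i).connectedComponentMk v).supp = {s, v, t})
    (hB : monoComponent c v i ∈ setB c) (hB1 : monoComponent c v i ∉ setB1 c) :
    (colorClass c (c s(s, t))).IsIsolated v := by
  simp only [setB1, Set.mem_ofPred_eq, not_and, not_forall, not_le, exists_prop] at hB1
  obtain ⟨⟨j, K⟩, ⟨φ⟩, hYX, hmeet⟩ := hB1 hB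
  obtain ⟨p, q, hp, hq, hpq⟩ := (Set.one_lt_ncard_iff (Set.toFinite _)).mp hmeet
  have hij : i ≠ j := by
    rintro rfl
    have hK : K = (colorClass c i).connectedComponentMk v := hp.2.symm.trans hp.1
    exact hYX (by rw [hK, monoComponent])
  obtain ⟨y₀, y₁, y₂, h₀₁, h₀₂, h₁₂, hK, h₀₁', h₁₂'⟩ :=
    exists_eq_of_induce_iso_pathGraph_three φ
  have hpX : p ∈ ({s, v, t} : Set (Fin n)) := hsupp ▸ hp.1
  have hqX : q ∈ ({s, v, t} : Set (Fin n)) := hsupp ▸ hq.1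
  have hpY : p ∈ ({y₀, y₁, y₂} : Set (Fin n)) := hK ▸ hp.2
  have hqY : q ∈ ({y₀, y₁, y₂} : Set (Fin n)) := hK ▸ hq.2
  rcases hpY with rfl | rfl | rfl <;> rcases hqY with rfl | rfl | rfl
  · exact absurd rfl hpq
  · exact hc.isIsolated_of_path_edge_mem hn htri hvs hvt hst hij hpX hqX h₀₁' h₁₂' h₀₂
  · exact hc.isIsolated_of_path_ends_mem hn htri hvs hvt hst hij hpX hqX h₀₁' h₁₂' h₀₂
  · exact hc.isIsolated_of_path_edge_mem hn htri hvs hvt hst hij hqX hpX h₀₁' h₁₂' h₀₂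
  · exact absurd rfl hpq
  · exact hc.isIsolated_of_path_edge_mem hn htri hvs hvt hst hij hqX hpX h₁₂'.symm
      h₀₁'.symm h₀₂.symm
  · exact hc.isIsolated_of_path_ends_mem hn htri hvs hvt hst hij hqX hpX h₀₁' h₁₂' h₀₂
  · exact hc.isIsolated_of_path_edge_mem hn htri hvs hvt hst hij hpX hqX h₁₂'.symm
      h₀₁'.symm h₀₂.symm
  · exact absurd rfl hpq

variable [DecidableEq α]

def cherryColors (c : Sym2 (Fin n) → α) (v : Fin n) (i : α) : Finset α :=
  ((colorClass c i).neighborFinset v).offDiag.image fun p => c s(p.1, p.2)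

def IsB1Center (c : Sym2 (Fin n) → α) (v : Fin n) (i : α) : Prop :=
  (colorClass c i).degree v = 2 ∧
    (∀ u, (colorClass c i).Adj v u → (colorClass c i).degree u = 1) ∧
    monoComponent c v i ∈ setB1 c

theorem mem_cherryColors {v : Fin n} {j : α} : j ∈ cherryColors c v i ↔
    ∃ a b, (colorClass c i).Adj v a ∧ (colorClass c i).Adj v b ∧ a ≠ b ∧ c s(a, b) = j := by
  simp [cherryColors, and_assoc]

namespace IsPQColoring

variable {v : Fin n}

theorem isIsolated_of_degree_eq_two {s t : Fin n} (hc : IsPQColoring 5 8 c) (hn : 5 ≤ n)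
    (htri : ¬ HasMonoTriangle c) (hvs : (colorClass c i).Adj v s)
    (hvt : (colorClass c i).Adj v t) (hst : s ≠ t) (hv : (colorClass c i).degree v = 2)
    (hcenter : ¬ IsB1Center c v i) : (colorClass c (c s(s, t))).IsIsolated v := by
  have hN := neighborFinset_eq_of_degree_eq_two hv hvs hvt hst
  by_cases hends : ∀ u, (colorClass c i).Adj v u → (colorClass c i).degree u = 1
  · have hds := hends s hvs
    have hdt := hends t hvt
    exact hc.isIsolated_of_notMem_setB1 hn htri hvs hvt hst
      (supp_connectedComponentMk_eq_of_degree hvs hvt hst hv hds hdt)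
      (nonempty_induce_supp_iso_pathGraph_three hvs hvt hst hv hds hdt)
      fun hB1 => hcenter ⟨hv, hends, hB1⟩
  push Not at hends
  obtain ⟨u, hvu, hdu⟩ := hends
  obtain ⟨w, hw, hwv⟩ : ∃ w ∈ (colorClass c i).neighborFinset u, w ≠ v := by
    refine exists_mem_ne ?_ v
    have := (colorClass c i).degree_pos_iff_exists_adj u |>.mpr ⟨v, hvu.symm⟩
    rw [card_neighborFinset_eq_degree]
    omega
  rw [mem_neighborFinset] at hw
  have hu : u ∈ ({s, t} : Finset (Fin n)) := hN ▸ (mem_neighborFinset _ _ _).mpr hvu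
  simp only [mem_insert, mem_singleton] at hu
  rcases hu with rfl | rfl
  · rw [Sym2.eq_swap]
    exact hc.isIsolated_of_cherry_of_adj hn htri hvt hvu hst.symm hw hwv
  · exact hc.isIsolated_of_cherry_of_adj hn htri hvs hvu hst hw hwv

theorem isIsolated_of_mem_cherryColors (hc : IsPQColoring 5 8 c) (hn : 5 ≤ n)
    (htri : ¬ HasMonoTriangle c) (hcenter : ¬ IsB1Center c v i) {j : α}
    (hj : j ∈ cherryColors c v i) : (colorClass c j).IsIsolated v := by
  obtain ⟨a, b, hva, hvb, hab, rfl⟩ := mem_cherryColors.mp hj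
  have hab2 : #{a, b} = 2 := card_pair hab
  have h2 : 2 ≤ (colorClass c i).degree v := by
    rw [← card_neighborFinset_eq_degree, ← hab2]
    exact card_le_card (by simp [insert_subset_iff, hva, hvb])
  rcases (hc.degree_colorClass_le_three v).eq_or_lt with h3 | h3
  · obtain ⟨d, hd, hdab⟩ := exists_mem_notMem_of_card_lt_card
      (s := {a, b}) (t := (colorClass c i).neighborFinset v)
      (by rw [hab2, card_neighborFinset_eq_degree, h3]; omega)
    simp only [mem_insert, mem_singleton, not_or] at hdab
    rw [mem_neighborFinset] at hd
    exact hc.isIsolated_of_three_neighbors htri hva hvb hd hab (Ne.symm hdab.1) (Ne.symm hdab.2)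
  · exact hc.isIsolated_of_degree_eq_two hn htri hva hvb hab (by omega) hcenter

theorem injOn_color_cherries (hc : IsPQColoring 5 8 c) (hn : 5 ≤ n) :
    Set.InjOn c (((colorClass c i).neighborFinset v).offDiag.image Sym2.mk.uncurry :
      Finset (Sym2 (Fin n))) := by
  intro e he e' he' heq
  simp only [coe_image, Set.mem_image, mem_coe, mem_offDiag, mem_neighborFinset,
    Prod.exists] at he he'
  obtain ⟨a, b, ⟨ha, hb, hab⟩, rfl⟩ := he
  obtain ⟨a', b', ⟨ha', hb', hab'⟩, rfl⟩ := he'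
  simp only [Function.uncurry_apply_pair] at heq ⊢
  by_contra hne
  by_cases haa' : a = a'
  · subst haa'
    exact hc.color_ne_of_three_neighbors hn ha hb hb' hab hab' (fun h => hne (by rw [h])) heq
  by_cases hab'' : a = b'
  · subst hab''
    exact hc.color_ne_of_three_neighbors hn ha hb ha' hab hab'.symm
      (fun h => hne (by rw [h, Sym2.eq_swap])) (heq.trans (congrArg c Sym2.eq_swap))
  by_cases hba' : b = a'
  · subst hba'
    exact hc.color_ne_of_three_neighbors hn hb ha hb' hab.symm hab' hab''
      ((congrArg c Sym2.eq_swap).trans heq)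
  by_cases hbb' : b = b'
  · subst hbb'
    exact hc.color_ne_of_three_neighbors hn hb ha ha' hab.symm hab'.symm haa'
      ((congrArg c Sym2.eq_swap).trans (heq.trans (congrArg c Sym2.eq_swap)))
  exact hc.color_ne_of_disjoint_cherries ha hb ha' hb' (by simp [*]) heq

theorem card_cherryColors (hc : IsPQColoring 5 8 c) (hn : 5 ≤ n) :
    #(cherryColors c v i) = ((colorClass c i).degree v).choose 2 := by
  have h : cherryColors c v i =
      (((colorClass c i).neighborFinset v).offDiag.image Sym2.mk.uncurry).image c := by
    rw [image_image]
    rfl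
  rw [h, card_image_of_injOn (hc.injOn_color_cherries hn), Sym2.card_image_offDiag,
    card_neighborFinset_eq_degree]

theorem disjoint_cherryColors (hc : IsPQColoring 5 8 c) {i' : α} (hii' : i ≠ i') :
    Disjoint (cherryColors c v i) (cherryColors c v i') := by
  rw [Finset.disjoint_left]
  intro j hj hj'
  obtain ⟨a, b, ha, hb, hab, rfl⟩ := mem_cherryColors.mp hj
  obtain ⟨a', b', ha', hb', hab', h⟩ := mem_cherryColors.mp hj'
  exact hc.color_ne_of_cherries_of_ne hii' ha hb ha' hb' hab hab' h.symm

variable [Fintype α]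

open Classical in
theorem sum_choose_two_degree_le (hc : IsPQColoring 5 8 c) (hn : 5 ≤ n)
    (htri : ¬ HasMonoTriangle c) (v : Fin n) :
    ∑ i, ((colorClass c i).degree v).choose 2 ≤
      #{j | (colorClass c j).degree v = 0} + #{i | IsB1Center c v i} := by
  rw [← sum_filter_not_add_sum_filter univ (IsB1Center c v)]
  gcongr ?_ + ?_
  · calc ∑ i ∈ univ.filter (¬ IsB1Center c v ·), ((colorClass c i).degree v).choose 2
        = #((univ.filter (¬ IsB1Center c v ·)).biUnion (cherryColors c v)) := by
          rw [card_biUnion fun i _ i' _ hii' => hc.disjoint_cherryColors hii']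
          simp_rw [hc.card_cherryColors hn]
      _ ≤ #{j | (colorClass c j).degree v = 0} := by
          refine card_le_card fun j hj => ?_
          obtain ⟨i, hi, hj⟩ := mem_biUnion.mp hj
          exact mem_filter.mpr ⟨mem_univ _,
            (hc.isIsolated_of_mem_cherryColors hn htri (mem_filter.mp hi).2 hj).degree_eq_zero⟩
  · rw [card_eq_sum_ones]
    exact (sum_congr rfl fun i hi => by rw [(mem_filter.mp hi).2.1]; rfl).le

open Classical in
theorem sum_choose_two_le (hc : IsPQColoring 5 8 c) (hn : 5 ≤ n) (htri : ¬ HasMonoTriangle c) :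
    ∑ p : Fin n × α, ((colorClass c p.2).degree p.1).choose 2 ≤
      #{p : Fin n × α | (colorClass c p.2).degree p.1 = 0} +
        #{p : Fin n × α | IsB1Center c p.1 p.2} := by
  simp only [card_filter, Fintype.sum_prod_type, ← sum_add_distrib]
  refine sum_le_sum fun v _ => ?_
  simpa only [card_filter, sum_add_distrib] using hc.sum_choose_two_degree_le hn htri v

theorem card_mul_add_sum_choose_two (hc : IsPQColoring 5 8 c) :
    n * Fintype.card α + ∑ p : Fin n × α, ((colorClass c p.2).degree p.1).choose 2 =
      n * (n - 1) + #{p : Fin n × α | (colorClass c p.2).degree p.1 = 0} +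
        #{p : Fin n × α | (colorClass c p.2).degree p.1 = 3} := by
  have key : ∀ d ≤ 3,
      1 + d.choose 2 = d + (if d = 0 then 1 else 0) + (if d = 3 then 1 else 0) := by
    decide
  have hsum : ∑ p : Fin n × α, (colorClass c p.2).degree p.1 = n * (n - 1) := by
    simp [Fintype.sum_prod_type, sum_degree_colorClass]
  calc n * Fintype.card α + ∑ p : Fin n × α, ((colorClass c p.2).degree p.1).choose 2
      = ∑ p : Fin n × α, (1 + ((colorClass c p.2).degree p.1).choose 2) := by
        simp [sum_add_distrib]
    _ = _ := by
        rw [sum_congr rfl fun p _ => key _ (hc.degree_colorClass_le_three p.1),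
          sum_add_distrib, sum_add_distrib, hsum, sum_boole, sum_boole, Nat.cast_id, Nat.cast_id]

theorem ncard_setD_le (hc : IsPQColoring 5 8 c) :
    (setD c).ncard ≤ #{p : Fin n × α | (colorClass c p.2).degree p.1 = 3} := by
  rw [← Set.ncard_coe_finset]
  refine (Set.ncard_le_ncard ?_ (Set.toFinite _)).trans
    (Set.ncard_image_le (f := fun p => monoComponent c p.1 p.2) (Set.toFinite _))
  rintro ⟨i, K⟩ ⟨φ⟩
  obtain ⟨u, hu, h3⟩ := exists_three_le_degree_of_induce_iso_starK13 φ
  exact ⟨(u, i), by simpa using le_antisymm (hc.degree_colorClass_le_three u) h3,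
    congrArg (Sigma.mk i) (hu : (colorClass c i).connectedComponentMk u = K)⟩

end IsPQColoring

open Classical in
theorem card_isB1Center_le [Fintype α] :
    #{p : Fin n × α | IsB1Center c p.1 p.2} ≤ (setB1 c).ncard := by
  rw [← Set.ncard_coe_finset]
  refine Set.ncard_le_ncard_of_injOn (fun p => monoComponent c p.1 p.2)
    (fun p hp => (by simpa using hp : IsB1Center c p.1 p.2).2.2) ?_ (Set.toFinite _)
  rintro ⟨v, i⟩ hp ⟨v', i'⟩ hp' heq
  simp only [coe_filter, mem_univ, true_and, Set.mem_ofPred_eq] at hp hp'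
  obtain ⟨rfl, heq⟩ := Sigma.mk.inj_iff.mp heq
  obtain ⟨s, t, hst, hN⟩ := card_eq_two.mp ((card_neighborFinset_eq_degree _ v).trans hp.1)
  have hs : (colorClass c i).Adj v s := (mem_neighborFinset _ _ _).mp (by simp [hN])
  have ht : (colorClass c i).Adj v t := (mem_neighborFinset _ _ _).mp (by simp [hN])
  have hsupp := supp_connectedComponentMk_eq_of_degree hs ht hst hp.1 (hp.2.1 s hs) (hp.2.1 t ht)
  have hv' : v' ∈ ({s, v, t} : Set (Fin n)) := hsupp ▸ (eq_of_heq heq).symm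
  rcases hv' with rfl | rfl | rfl
  · exact absurd hp'.1 (by rw [hp.2.1 _ hs]; decide)
  · rfl
  · exact absurd hp'.1 (by rw [hp.2.1 _ ht]; decide)

end Coloring

/-- For a `(5,8)`-coloring of `K_n` (`n ≥ 5`) with `m` colors and no
monochromatic triangle, `m·n − 2·binom(n,2) ≥ |D| − |B₁|`. -/
theorem degree_count_inequality {n m : ℕ} (hn : 5 ≤ n)
    (c : Sym2 (Fin n) → Fin m) (hc : IsPQColoring 5 8 c)
    (htri : ¬ HasMonoTriangle c) :
    ((setD c).ncard : ℝ) - (setB1 c).ncard ≤ (m : ℝ) * n - 2 * (n.choose 2) := by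
  have hcount := hc.card_mul_add_sum_choose_two
  have hcharge := hc.sum_choose_two_le hn htri
  have hD := hc.ncard_setD_le
  have hB1 := card_isB1Center_le (c := c)
  have hchoose : 2 * n.choose 2 = n * (n - 1) := by
    rw [Nat.choose_two_right, mul_comm, Nat.div_two_mul_two_of_even (Nat.even_mul_pred_self n)]
  rw [Fintype.card_fin] at hcount
  have h : (setD c).ncard + 2 * n.choose 2 ≤ m * n + (setB1 c).ncard := by
    rw [hchoose, mul_comm m]
    omega
  have h' := (Nat.cast_le (α := ℝ)).mpr h
  push_cast at h'
  linarith
end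

section
/- Let n ≥ 5 and let c be a (5,8)-coloring of K_n with m colors and with no monochromatic triangle. Then m·n ≥ 4|D| + 6|B_1|. -/
/-!
Send each star `X ∈ D` of colour `i` to the four pairs `(i, v)`, `v ∈ V(X)`, and each path
`x - y - z ∈ B₁` of colour `i` to the six pairs `(i, v)` and `(j, v)`, `v ∈ {x, y, z}`, where `j` is
the colour of `xz`. These pairs in `[m] × [n]` are pairwise distinct. Two pairs carrying the colour
of their own components can only coincide inside one component, since the components of a colour
class are disjoint. Any other coincidence yields five vertices on which three of the ten edges
repeat the colour of another edge; the ten edges then carry at most seven colours, against the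
`(5,8)` property. When two paths of `B₁` with the same `j` meet, the `B₁` condition makes them
share a single vertex, which is what makes the five vertices distinct.
-/

open SimpleGraph

open Finset

theorem Finset.card_le_seven {β : Type*} [DecidableEq β] {a b c d e f g : β} :
    #{a, b, c, d, e, f, g} ≤ 7 :=
  (card_insert_le _ _).trans (Nat.succ_le_succ card_le_six)

namespace IsPQColoring

variable {n : ℕ} {α : Type*} {c : Sym2 (Fin n) → α}

theorem exists_color_notMem {p q : ℕ} (hc : IsPQColoring p q c)
    {S : Finset (Fin n)} (hS : #S = p) {T : Finset α} (hT : #T < q) :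
    ∃ x ∈ S, ∃ y ∈ S, x ≠ y ∧ c s(x, y) ∉ T := by
  by_contra! h
  have hsub : {j : α | ∃ x ∈ S, ∃ y ∈ S, x ≠ y ∧ c s(x, y) = j} ⊆ T := by
    rintro _ ⟨x, hx, y, hy, hxy, rfl⟩
    exact h x hx y hy hxy
  have := (Set.ncard_le_ncard hsub T.finite_toSet).trans_eq (Set.ncard_coe_finset T)
  have := hc S hS
  omega

theorem eight_le_card_colors [DecidableEq α] (hc : IsPQColoring 5 8 c)
    {v₁ v₂ v₃ v₄ v₅ : Fin n} (hv : [v₁, v₂, v₃, v₄, v₅].Nodup) :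
    8 ≤ #{c s(v₁, v₂), c s(v₁, v₃), c s(v₁, v₄), c s(v₁, v₅), c s(v₂, v₃), c s(v₂, v₄),
      c s(v₂, v₅), c s(v₃, v₄), c s(v₃, v₅), c s(v₄, v₅)} := by
  by_contra! h
  simp only [List.nodup_cons, List.mem_cons, List.not_mem_nil, or_false, not_or] at hv
  obtain ⟨x, hx, y, hy, hxy, hT⟩ := hc.exists_color_notMem (S := {v₁, v₂, v₃, v₄, v₅})
    (by simp [*]) h
  simp only [mem_insert, mem_singleton] at hx hy
  rcases hx with rfl | rfl | rfl | rfl | rfl <;> rcases hy with rfl | rfl | rfl | rfl | rfl <;>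
    simp [Sym2.eq_swap] at hT hxy

variable {x y z p q x' y' z' : Fin n}

theorem false_of_star_at_end (hc : IsPQColoring 5 8 c) (hv : [x, y, z, p, q].Nodup)
    (hxyz : c s(x, y) = c s(y, z)) (hp : c s(x, p) = c s(x, z)) (hq : c s(x, q) = c s(x, z)) :
    False := by
  classical
  have h8 := hc.eight_le_card_colors hv
  rw [← hxyz, hp, hq] at h8
  simp only [insert_eq_of_mem, mem_insert, mem_singleton, true_or, or_true] at h8
  exact absurd (h8.trans card_le_seven) (by decide)

theorem false_of_cherry_at_middle (hc : IsPQColoring 5 8 c) (hv : [x, y, z, p, q].Nodup)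
    (hxyz : c s(x, y) = c s(y, z)) (hp : c s(y, p) = c s(x, z)) (hq : c s(y, q) = c s(x, z)) :
    False := by
  classical
  have h8 := hc.eight_le_card_colors hv
  rw [← hxyz, hp, hq] at h8
  simp only [insert_eq_of_mem, mem_insert, mem_singleton, true_or, or_true] at h8
  exact absurd (h8.trans card_le_seven) (by decide)

theorem false_of_path_from_middle (hc : IsPQColoring 5 8 c) (hv : [x, y, z, p, q].Nodup)
    (hxyz : c s(x, y) = c s(y, z)) (hp : c s(y, p) = c s(x, z)) (hq : c s(p, q) = c s(x, z)) :
    False := by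
  classical
  have h8 := hc.eight_le_card_colors hv
  rw [← hxyz, hp, hq] at h8
  simp only [insert_eq_of_mem, mem_insert, mem_singleton, true_or, or_true] at h8
  exact absurd (h8.trans card_le_seven) (by decide)

theorem false_of_paths_sharing_ends (hc : IsPQColoring 5 8 c) (hv : [x, y, z, y', z'].Nodup)
    (hX : c s(x, y) = c s(y, z)) (hY : c s(x, y') = c s(y', z')) (hj : c s(x, z) = c s(x, z')) :
    False := by
  classical
  have h8 := hc.eight_le_card_colors hv
  rw [← hX, ← hY, ← hj] at h8
  simp only [insert_eq_of_mem, mem_insert, mem_singleton, true_or, or_true] at h8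
  exact absurd (h8.trans card_le_seven) (by decide)

theorem false_of_paths_sharing_end_middle (hc : IsPQColoring 5 8 c)
    (hv : [x, y, z, x', z'].Nodup) (hX : c s(x, y) = c s(y, z)) (hY : c s(x', x) = c s(x, z'))
    (hj : c s(x, z) = c s(x', z')) : False := by
  classical
  have h8 := hc.eight_le_card_colors hv
  rw [Sym2.eq_swap] at hY
  rw [← hX, ← hY, ← hj] at h8
  simp only [insert_eq_of_mem, mem_insert, mem_singleton, true_or, or_true] at h8
  exact absurd (h8.trans card_le_seven) (by decide)

theorem false_of_paths_sharing_middles (hc : IsPQColoring 5 8 c) (hv : [x, y, z, x', z'].Nodup)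
    (hX : c s(x, y) = c s(y, z)) (hY : c s(x', y) = c s(y, z')) (hj : c s(x, z) = c s(x', z')) :
    False := by
  classical
  have h8 := hc.eight_le_card_colors hv
  rw [Sym2.eq_swap] at hY
  rw [← hX, hY, ← hj] at h8
  simp only [insert_eq_of_mem, mem_insert, mem_singleton, true_or, or_true] at h8
  exact absurd (h8.trans card_le_seven) (by decide)

end IsPQColoring

namespace ComponentIso

variable {V W : Type*} {G : SimpleGraph V} {K : G.ConnectedComponent} {H : SimpleGraph W}

noncomputable def embedding (h : ComponentIso G K H) : H ↪g G :=
  (Embedding.induce K.supp).comp (Nonempty.some h).symm.toEmbedding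

theorem range_embedding (h : ComponentIso G K H) : Set.range h.embedding = K.supp := by
  ext v
  refine ⟨?_, fun hv => ⟨h.some ⟨v, hv⟩, by simp [embedding]⟩⟩
  rintro ⟨a, rfl⟩
  exact (h.some.symm a).2

theorem ncard_supp [Finite W] (h : ComponentIso G K H) : K.supp.ncard = Nat.card W := by
  rw [← h.range_embedding, ← Nat.card_coe_set_eq,
    Nat.card_range_of_injective h.embedding.injective]

end ComponentIso

theorem pathGraph_three_path_or_cherry (w : Fin 3) :
    ∃ p q, p ≠ q ∧ q ≠ w ∧ (pathGraph 3).Adj w p ∧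
      ((pathGraph 3).Adj w q ∨ (pathGraph 3).Adj p q) := by
  revert w
  simp only [pathGraph_adj]
  decide

theorem starK13_path_or_cherry (w : Fin 1 ⊕ Fin 3) :
    ∃ p q, p ≠ q ∧ q ≠ w ∧ starK13.Adj w p ∧ (starK13.Adj w q ∨ starK13.Adj p q) := by
  revert w
  simp only [starK13, completeBipartiteGraph_adj]
  decide

theorem starK13_exists_cherry_of_adj {a b : Fin 1 ⊕ Fin 3} (hab : starK13.Adj a b) :
    ∃ p q, p ≠ q ∧ p ≠ a ∧ p ≠ b ∧ q ≠ a ∧ q ≠ b ∧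
      (starK13.Adj a p ∧ starK13.Adj a q ∨ starK13.Adj b p ∧ starK13.Adj b q) := by
  revert a b
  simp only [starK13, completeBipartiteGraph_adj]
  decide

section Embeddings

variable {n : ℕ} {α : Type*} {c : Sym2 (Fin n) → α}

theorem MonoPath2.symm {x y z : Fin n} (h : MonoPath2 c x y z) : MonoPath2 c z y x := by
  obtain ⟨hxy, hyz, hxz, h⟩ := h
  exact ⟨hyz.symm, hxy.symm, hxz.symm, by rw [Sym2.eq_swap, ← h, Sym2.eq_swap]⟩

variable {W : Type*} {H : SimpleGraph W} {j : α} {x y z : Fin n}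

theorem IsPQColoring.false_of_middle_mem_range (hc : IsPQColoring 5 8 c)
    (hH : ∀ w, ∃ p q, p ≠ q ∧ q ≠ w ∧ H.Adj w p ∧ (H.Adj w q ∨ H.Adj p q))
    (φ : H ↪g colorClass c j) (hxyz : MonoPath2 c x y z) (hxz : c s(x, z) = j)
    (hy : y ∈ Set.range φ) (hx : x ∉ Set.range φ) (hz : z ∉ Set.range φ) : False := by
  obtain ⟨w, rfl⟩ := hy
  obtain ⟨p, q, hpq, hqw, hwp, hq⟩ := hH w
  obtain ⟨hwp', cwp⟩ := φ.map_adj_iff.2 hwp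
  have hv : [x, φ w, z, φ p, φ q].Nodup := by
    simp only [List.nodup_cons, List.mem_cons, List.not_mem_nil, or_false, not_or,
      List.nodup_nil, not_false_eq_true, and_true]
    refine ⟨⟨hxyz.1, hxyz.2.2.1, ?_, ?_⟩, ⟨hxyz.2.1, hwp', φ.injective.ne hqw.symm⟩, ⟨?_, ?_⟩,
      φ.injective.ne hpq⟩
    all_goals rintro rfl
    exacts [hx ⟨_, rfl⟩, hx ⟨_, rfl⟩, hz ⟨_, rfl⟩, hz ⟨_, rfl⟩]
  rcases hq with hwq | hpq'
  · exact hc.false_of_cherry_at_middle hv hxyz.2.2.2 (cwp.trans hxz.symm)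
      ((φ.map_adj_iff.2 hwq).2.trans hxz.symm)
  · exact hc.false_of_path_from_middle hv hxyz.2.2.2 (cwp.trans hxz.symm)
      ((φ.map_adj_iff.2 hpq').2.trans hxz.symm)

theorem IsPQColoring.false_of_embedding_cherry_at_end (hc : IsPQColoring 5 8 c)
    (φ : H ↪g colorClass c j) (hxyz : MonoPath2 c x y z) (hxz : c s(x, z) = j)
    (hxy : c s(x, y) ≠ j) {a b p q : W} (hpq : p ≠ q) (hpb : p ≠ b) (hqb : q ≠ b)
    (hap : H.Adj a p) (haq : H.Adj a q) (hx : φ a = x) (hz : φ b = z) : False := by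
  subst hx hz
  obtain ⟨hap', cap⟩ := φ.map_adj_iff.2 hap
  obtain ⟨haq', caq⟩ := φ.map_adj_iff.2 haq
  have hv : [φ a, y, φ b, φ p, φ q].Nodup := by
    simp only [List.nodup_cons, List.mem_cons, List.not_mem_nil, or_false, not_or,
      List.nodup_nil, not_false_eq_true, and_true]
    refine ⟨⟨hxyz.1, hxyz.2.2.1, hap', haq'⟩, ⟨hxyz.2.1, ?_, ?_⟩,
      ⟨φ.injective.ne hpb.symm, φ.injective.ne hqb.symm⟩, φ.injective.ne hpq⟩
    all_goals rintro rfl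
    exacts [hxy cap, hxy caq]
  exact hc.false_of_star_at_end hv hxyz.2.2.2 (cap.trans hxz.symm) (caq.trans hxz.symm)

theorem IsPQColoring.false_of_ends_mem_range_star (hc : IsPQColoring 5 8 c)
    (φ : starK13 ↪g colorClass c j) (hxyz : MonoPath2 c x y z) (hxz : c s(x, z) = j)
    (hxy : c s(x, y) ≠ j) (hx : x ∈ Set.range φ) (hz : z ∈ Set.range φ) : False := by
  obtain ⟨a, hx⟩ := hx
  obtain ⟨b, hz⟩ := hz
  have hab : starK13.Adj a b := φ.map_adj_iff.1 (by rw [hx, hz]; exact ⟨hxyz.2.2.1, hxz⟩)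
  obtain ⟨p, q, hpq, hpa, hpb, hqa, hqb, hab⟩ := starK13_exists_cherry_of_adj hab
  rcases hab with ⟨hap, haq⟩ | ⟨hbp, hbq⟩
  · exact hc.false_of_embedding_cherry_at_end φ hxyz hxz hxy hpq hpb hqb hap haq hx hz
  · refine hc.false_of_embedding_cherry_at_end φ hxyz.symm (by rwa [Sym2.eq_swap]) ?_ hpq hpa
      hqa hbp hbq hz hx
    rwa [Sym2.eq_swap, ← hxyz.2.2.2]

theorem IsPQColoring.false_of_paths_meet_once (hc : IsPQColoring 5 8 c)
    {x' y' z' v : Fin n} (hX : MonoPath2 c x y z) (hY : MonoPath2 c x' y' z')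
    (hj : c s(x, z) = c s(x', z')) (hv : v = x ∨ v = y ∨ v = z) (hv' : v = x' ∨ v = y' ∨ v = z')
    (hsep : ∀ w, (w = x ∨ w = y ∨ w = z) → (w = x' ∨ w = y' ∨ w = z') → w = v) : False := by
  wlog hvz : v ≠ z generalizing x z
  · exact this hX.symm (by rwa [Sym2.eq_swap]) (by tauto) (fun w h => hsep w (by tauto))
      (by rintro rfl; exact hX.2.2.1 (not_not.1 hvz))
  wlog hvz' : v ≠ z' generalizing x' z'
  · exact this hY.symm (by tauto) (by rwa [Sym2.eq_swap (a := z')])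
      (fun w h h' => hsep w h (by tauto)) (by rintro rfl; exact hY.2.2.1 (not_not.1 hvz'))
  have hx := hsep x (by tauto)
  have hy := hsep y (by tauto)
  have hz := hsep z (by tauto)
  obtain ⟨hxy, hyz, hxz, hX⟩ := hX
  obtain ⟨hxy', hyz', hxz', hY⟩ := hY
  rcases hv with rfl | rfl | rfl <;> rcases hv' with h | h | h <;> subst h
  · exact hc.false_of_paths_sharing_ends (by grind [List.nodup_cons]) hX hY hj
  · exact hc.false_of_paths_sharing_end_middle (by grind [List.nodup_cons]) hX hY hj
  · exact hvz' rfl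
  · exact hc.false_of_paths_sharing_end_middle (by grind [List.nodup_cons]) hY hX hj.symm
  · exact hc.false_of_paths_sharing_middles (by grind [List.nodup_cons]) hX hY hj
  · exact hvz' rfl
  all_goals exact hvz rfl

end Embeddings

theorem eq_of_fst_eq_of_mem_supp {ι V : Type*} {G : ι → SimpleGraph V}
    {X Y : Σ i, (G i).ConnectedComponent} (h : X.1 = Y.1) {v : V}
    (hX : v ∈ X.2.supp) (hY : v ∈ Y.2.supp) : X = Y := by
  obtain ⟨i, K⟩ := X
  obtain ⟨i', L⟩ := Y
  obtain rfl : i = i' := h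
  exact congrArg (Sigma.mk i) (ConnectedComponent.eq_of_common_vertex hX hY)

section Components

variable {n : ℕ} {α : Type*} {c : Sym2 (Fin n) → α}

noncomputable def pathOf {X : Σ i : α, (colorClass c i).ConnectedComponent} (hX : X ∈ setB c) :
    pathGraph 3 ↪g colorClass c X.1 :=
  ComponentIso.embedding hX

noncomputable def starOf {X : Σ i : α, (colorClass c i).ConnectedComponent} (hX : X ∈ setD c) :
    starK13 ↪g colorClass c X.1 :=
  ComponentIso.embedding hX

noncomputable def secondColor {X : Σ i : α, (colorClass c i).ConnectedComponent}
    (hX : X ∈ setB c) : α :=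
  c s(pathOf hX 0, pathOf hX 2)

variable {X Y : Σ i : α, (colorClass c i).ConnectedComponent}

theorem range_pathOf (hX : X ∈ setB c) : Set.range (pathOf hX) = X.2.supp :=
  ComponentIso.range_embedding hX

theorem range_starOf (hX : X ∈ setD c) : Set.range (starOf hX) = X.2.supp :=
  ComponentIso.range_embedding hX

theorem pathOf_mem_supp (hX : X ∈ setB c) (a : Fin 3) : pathOf hX a ∈ X.2.supp :=
  range_pathOf hX ▸ Set.mem_range_self a

theorem starOf_mem_supp (hX : X ∈ setD c) (a : Fin 1 ⊕ Fin 3) : starOf hX a ∈ X.2.supp :=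
  range_starOf hX ▸ Set.mem_range_self a

theorem mem_supp_iff_of_mem_setB (hX : X ∈ setB c) {v : Fin n} :
    v ∈ X.2.supp ↔ v = pathOf hX 0 ∨ v = pathOf hX 1 ∨ v = pathOf hX 2 := by
  rw [← range_pathOf hX]
  simp [Set.mem_range, Fin.exists_fin_succ, eq_comm]

theorem monoPath2_pathOf (hX : X ∈ setB c) :
    MonoPath2 c (pathOf hX 0) (pathOf hX 1) (pathOf hX 2) := by
  have h01 := (pathOf hX).map_adj_iff.2 (show (pathGraph 3).Adj 0 1 by simp [pathGraph_adj])
  have h12 := (pathOf hX).map_adj_iff.2 (show (pathGraph 3).Adj 1 2 by simp [pathGraph_adj])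
  exact ⟨h01.1, h12.1, (pathOf hX).injective.ne (by decide), h01.2.trans h12.2.symm⟩

theorem color_pathOf_zero_one (hX : X ∈ setB c) : c s(pathOf hX 0, pathOf hX 1) = X.1 :=
  ((pathOf hX).map_adj_iff.2 (show (pathGraph 3).Adj 0 1 by simp [pathGraph_adj])).2

theorem secondColor_ne (hX : X ∈ setB c) : secondColor hX ≠ X.1 :=
  fun h => absurd ((pathOf hX).map_adj_iff.1 ⟨(pathOf hX).injective.ne (by decide), h⟩)
    (by simp [pathGraph_adj])

theorem notMem_setB_of_mem_setD (hX : X ∈ setD c) : X ∉ setB c := fun hX' => by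
  have h := (ComponentIso.ncard_supp hX).symm.trans (ComponentIso.ncard_supp hX')
  simp at h

theorem eq_of_mem_setB1 (hX : X ∈ setB1 c) (hY : Y ∈ setB c) (hYX : Y ≠ X) {u w : Fin n}
    (hu : u ∈ X.2.supp) (hu' : u ∈ Y.2.supp) (hw : w ∈ X.2.supp) (hw' : w ∈ Y.2.supp) :
    u = w :=
  (Set.ncard_le_one_iff).1 (hX.2 Y hY hYX) ⟨hu, hu'⟩ ⟨hw, hw'⟩

theorem IsPQColoring.false_of_secondColor_eq_of_end_notMem (hc : IsPQColoring 5 8 c)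
    {W : Type*} {H : SimpleGraph W}
    (hH : ∀ w, ∃ p q, p ≠ q ∧ q ≠ w ∧ H.Adj w p ∧ (H.Adj w q ∨ H.Adj p q))
    (φ : H ↪g colorClass c Y.1) (hφ : Set.range φ = Y.2.supp) (hX : X ∈ setB c)
    (h : secondColor hX = Y.1) {v : Fin n} (hvX : v ∈ X.2.supp) (hvY : v ∈ Y.2.supp)
    (hx : pathOf hX 0 ∉ Y.2.supp) : False := by
  have hP := monoPath2_pathOf hX
  have hz : pathOf hX 2 ∉ Y.2.supp := fun hz =>
    hx (Y.2.mem_supp_of_adj_mem_supp hz ⟨hP.2.2.1.symm, by rw [Sym2.eq_swap]; exact h⟩)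
  rcases (mem_supp_iff_of_mem_setB hX).1 hvX with rfl | rfl | rfl
  · exact hx hvY
  · exact hc.false_of_middle_mem_range hH φ hP h (hφ ▸ hvY) (hφ ▸ hx) (hφ ▸ hz)
  · exact hz hvY

theorem IsPQColoring.false_of_secondColor_eq_of_mem_setD (hc : IsPQColoring 5 8 c)
    (hX : X ∈ setB c) (hY : Y ∈ setD c) (h : secondColor hX = Y.1) {v : Fin n}
    (hvX : v ∈ X.2.supp) (hvY : v ∈ Y.2.supp) : False := by
  by_cases hx : pathOf hX 0 ∈ Y.2.supp
  · have hP := monoPath2_pathOf hX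
    have hz := Y.2.mem_supp_of_adj_mem_supp hx ⟨hP.2.2.1, h⟩
    refine hc.false_of_ends_mem_range_star (starOf hY) hP h ?_ (range_starOf hY ▸ hx)
      (range_starOf hY ▸ hz)
    rw [color_pathOf_zero_one hX, ← h]
    exact (secondColor_ne hX).symm
  · exact hc.false_of_secondColor_eq_of_end_notMem starK13_path_or_cherry (starOf hY)
      (range_starOf hY) hX h hvX hvY hx

theorem IsPQColoring.false_of_secondColor_eq_of_mem_setB (hc : IsPQColoring 5 8 c)
    (hX : X ∈ setB1 c) (hY : Y ∈ setB c) (h : secondColor hX.1 = Y.1) {v : Fin n}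
    (hvX : v ∈ X.2.supp) (hvY : v ∈ Y.2.supp) : False := by
  have hYX : Y ≠ X := by
    rintro rfl
    exact secondColor_ne hX.1 h
  refine hc.false_of_secondColor_eq_of_end_notMem pathGraph_three_path_or_cherry (pathOf hY)
    (range_pathOf hY) hX.1 h hvX hvY fun hx => (monoPath2_pathOf hX.1).2.2.1 ?_
  refine eq_of_mem_setB1 hX hY hYX (pathOf_mem_supp _ 0) hx (pathOf_mem_supp _ 2) ?_
  exact Y.2.mem_supp_of_adj_mem_supp hx ⟨(monoPath2_pathOf hX.1).2.2.1, h⟩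

theorem IsPQColoring.eq_of_secondColor_eq (hc : IsPQColoring 5 8 c) (hX : X ∈ setB1 c)
    (hY : Y ∈ setB1 c) (h : secondColor hX.1 = secondColor hY.1) {v : Fin n}
    (hvX : v ∈ X.2.supp) (hvY : v ∈ Y.2.supp) : X = Y := by
  by_contra hXY
  refine hc.false_of_paths_meet_once (monoPath2_pathOf hX.1) (monoPath2_pathOf hY.1) h
    ((mem_supp_iff_of_mem_setB hX.1).1 hvX) ((mem_supp_iff_of_mem_setB hY.1).1 hvY)
    fun w hw hw' => ?_
  exact eq_of_mem_setB1 hX hY.1 (Ne.symm hXY) ((mem_supp_iff_of_mem_setB hX.1).2 hw)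
    ((mem_supp_iff_of_mem_setB hY.1).2 hw') hvX hvY

noncomputable def token (c : Sym2 (Fin n) → α) :
    (setD c × (Fin 1 ⊕ Fin 3)) ⊕ (setB1 c × (Bool × Fin 3)) → α × Fin n
  | .inl (X, a) => (X.1.1, starOf X.2 a)
  | .inr (X, b, a) => (cond b X.1.1 (secondColor X.2.1), pathOf X.2.1 a)

theorem IsPQColoring.token_injective (hc : IsPQColoring 5 8 c) :
    Function.Injective (token c) := by
  rintro (⟨⟨X, hX⟩, a⟩ | ⟨⟨X, hX⟩, _ | _, a⟩) (⟨⟨Y, hY⟩, b⟩ | ⟨⟨Y, hY⟩, _ | _, b⟩) h <;>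
    simp only [token, Prod.mk.injEq, cond_true, cond_false] at h <;> obtain ⟨hcol, hv⟩ := h
  · obtain rfl := eq_of_fst_eq_of_mem_supp hcol (starOf_mem_supp hX a)
      (hv ▸ starOf_mem_supp hY b)
    rw [(starOf hX).injective hv]
  · exact (hc.false_of_secondColor_eq_of_mem_setD hY.1 hX hcol.symm (hv ▸ pathOf_mem_supp _ b)
      (starOf_mem_supp hX a)).elim
  · obtain rfl := eq_of_fst_eq_of_mem_supp hcol (starOf_mem_supp hX a)
      (hv ▸ pathOf_mem_supp _ b)
    exact (notMem_setB_of_mem_setD hX hY.1).elim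
  · exact (hc.false_of_secondColor_eq_of_mem_setD hX.1 hY hcol (pathOf_mem_supp _ a)
      (hv ▸ starOf_mem_supp hY b)).elim
  · obtain rfl := hc.eq_of_secondColor_eq hX hY hcol (pathOf_mem_supp _ a)
      (hv ▸ pathOf_mem_supp _ b)
    rw [(pathOf hX.1).injective hv]
  · exact (hc.false_of_secondColor_eq_of_mem_setB hX hY.1 hcol (pathOf_mem_supp _ a)
      (hv ▸ pathOf_mem_supp _ b)).elim
  · obtain rfl := eq_of_fst_eq_of_mem_supp hcol (pathOf_mem_supp _ a)
      (hv ▸ starOf_mem_supp hY b)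
    exact (notMem_setB_of_mem_setD hY hX.1).elim
  · exact (hc.false_of_secondColor_eq_of_mem_setB hY hX.1 hcol.symm
      (hv ▸ pathOf_mem_supp _ b) (pathOf_mem_supp _ a)).elim
  · obtain rfl := eq_of_fst_eq_of_mem_supp hcol (pathOf_mem_supp _ a)
      (hv ▸ pathOf_mem_supp _ b)
    rw [(pathOf hX.1).injective hv]

end Components

theorem mn_lower_bound_general {n m : ℕ}
    (c : Sym2 (Fin n) → Fin m) (hc : IsPQColoring 5 8 c) :
    4 * (setD c).ncard + 6 * (setB1 c).ncard ≤ m * n := by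
  have h := Nat.card_le_card_of_injective _ hc.token_injective
  simp only [Nat.card_sum, Nat.card_prod, Nat.card_coe_set_eq, Nat.card_eq_fintype_card,
    Fintype.card_sum, Fintype.card_prod, Fintype.card_bool, Fintype.card_fin] at h
  omega

/-- For a `(5,8)`-coloring of `K_n` (`n ≥ 5`) with `m` colors and no
monochromatic triangle, `m·n ≥ 4|D| + 6|B₁|`. -/
theorem mn_lower_bound {n m : ℕ} (hn : 5 ≤ n)
    (c : Sym2 (Fin n) → Fin m) (hc : IsPQColoring 5 8 c)
    (htri : ¬ HasMonoTriangle c) :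
    4 * (setD c).ncard + 6 * (setB1 c).ncard ≤ m * n :=
  mn_lower_bound_general c hc
end
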